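/- arXiv:1301.3707 — 13 statements merged into one kernel-verified Lean document; each statement's English description precedes it below -/
import Mathlib

section
/- Let (X,S) be a non-degenerate involutive set-theoretic solution of the Yang–Baxter equation on a finite set X, with S(x,y) = (g_x(y), f_y(x)). Then for each x ∈ X there exists a unique y ∈ X such that S(x,y) = (x,y), and a unique z ∈ X such that S(z,x) = (z,x). -/
/-- For a non-degenerate involutive set-theoretic solution `(X,S)` on a finite set,
every `x ∈ X` has a unique `y` with `S(x,y) = (x,y)` and a unique `z` with `S(z,x) = (z,x)`. -/
theorem stmt_0 {X : Type*} [Fintype X]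
    (S : X × X → X × X) (g f : X → X → X)
    (hS : ∀ x y : X, S (x, y) = (g x y, f y x))
    (hg : ∀ x : X, Function.Bijective (g x))
    (hf : ∀ x : X, Function.Bijective (f x))
    (hinv : ∀ p : X × X, S (S p) = p) :
    ∀ x : X, (∃! y : X, S (x, y) = (x, y)) ∧ (∃! z : X, S (z, x) = (z, x)) := by
  intro x
  constructor
  · obtain ⟨y, hy⟩ := (hg x).surjective x
    refine ⟨y, ?_, ?_⟩
    · have h1 : S (x, y) = (x, f y x) := by rw [hS, hy]
      have h2 : S (x, f y x) = (x, y) := by rw [← h1]; exact hinv (x, y)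
      have h3 : g x (f y x) = x := by
        have := h2; rw [hS] at this
        exact (Prod.mk.injEq _ _ _ _).mp this |>.1
      have : f y x = y := (hg x).injective (h3.trans hy.symm)
      show S _ = _; rw [h1, this]
    · intro y' hy'
      rw [hS] at hy'
      have : g x y' = x := (Prod.mk.injEq _ _ _ _).mp hy' |>.1
      exact (hg x).injective (this.trans hy.symm)
  · obtain ⟨z, hz⟩ := (hf x).surjective x
    refine ⟨z, ?_, ?_⟩
    · have h1 : S (z, x) = (g z x, x) := by rw [hS, hz]
      have h2 : S (g z x, x) = (z, x) := by rw [← h1]; exact hinv (z, x)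
      have h3 : f x (g z x) = x := by
        have := h2; rw [hS] at this
        exact (Prod.mk.injEq _ _ _ _).mp this |>.2
      have : g z x = z := (hf x).injective (h3.trans hz.symm)
      show S _ = _; rw [h1, this]
    · intro z' hz'
      rw [hS] at hz'
      have : f x z' = x := (Prod.mk.injEq _ _ _ _).mp hz' |>.2
      exact (hf x).injective (this.trans hz.symm)
end

section
/- Let (X,S) be a non-degenerate symmetric (involutive and braided) set-theoretic solution on a finite set X. Then the assignment x ↦ φ_x := f_x^{-1} extends to a group homomorphism φ from the structure group G(X,S) to the symmetric group on X; i.e., whenever S(x₁,x₂) = (x₁′,x₂′), one has φ_{x₁} ∘ φ_{x₂} = φ_{x₁′} ∘ φ_{x₂′}. -/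
/-- Relators of the structure group presentation `⟨X ∣ xy = g_x(y) f_y(x)⟩`. -/
def structGrpRels {X : Type*} (g f : X → X → X) : Set (FreeGroup X) :=
  {w | ∃ x y : X, w = FreeGroup.of x * FreeGroup.of y *
      (FreeGroup.of (g x y) * FreeGroup.of (f y x))⁻¹}

/-- `S` acting on the first two components of `X³`. -/
def S12 {X : Type*} (S : X × X → X × X) : X × X × X → X × X × X :=
  fun p => ((S (p.1, p.2.1)).1, (S (p.1, p.2.1)).2, p.2.2)

/-- `S` acting on the last two components of `X³`. -/
def S23 {X : Type*} (S : X × X → X × X) : X × X × X → X × X × X :=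
  fun p => (p.1, (S (p.2.1, p.2.2)).1, (S (p.2.1, p.2.2)).2)

/-- The braid relation `S¹²S²³S¹² = S²³S¹²S²³`. -/
def Braided {X : Type*} (S : X × X → X × X) : Prop :=
  S12 S ∘ S23 S ∘ S12 S = S23 S ∘ S12 S ∘ S23 S

/-!
The third coordinate of the braid relation at `(x, y, z)` reads
`f_z ∘ f_y = f_{f_z(y)} ∘ f_{g_y(z)}`, i.e. `f_{x₂} ∘ f_{x₁} = f_{x₂'} ∘ f_{x₁'}` whenever
`S(x₁, x₂) = (x₁', x₂')`. Inverting gives `φ_{x₁} φ_{x₂} = φ_{x₁'} φ_{x₂'}`, which says exactly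
that `φ` kills the defining relators of `G(X,S)`.
-/

theorem Braided.f_f_eq {X : Type*} {S : X × X → X × X} {g f : X → X → X}
    (hS : ∀ x y : X, S (x, y) = (g x y, f y x)) (hbr : Braided S) (x y z : X) :
    f z (f y x) = f (f z y) (f (g y z) x) := by
  have h := congrFun hbr (x, y, z)
  simp only [S12, S23, Function.comp_apply, hS] at h
  exact congrArg (fun p : X × X × X => p.2.2) h

theorem Braided.ofBijective_symm_mul_ofBijective_symm {X : Type*} {S : X × X → X × X}
    {g f : X → X → X} (hS : ∀ x y : X, S (x, y) = (g x y, f y x)) (hbr : Braided S)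
    (hf : ∀ x : X, Function.Bijective (f x)) {x₁ x₂ x₁' x₂' : X}
    (h : S (x₁, x₂) = (x₁', x₂')) :
    (Equiv.ofBijective (f x₁) (hf x₁)).symm * (Equiv.ofBijective (f x₂) (hf x₂)).symm
      = (Equiv.ofBijective (f x₁') (hf x₁')).symm *
          (Equiv.ofBijective (f x₂') (hf x₂')).symm := by
  obtain ⟨rfl, rfl⟩ := Prod.mk.inj (h.symm.trans (hS x₁ x₂))
  have hf_mul : Equiv.ofBijective (f x₂) (hf x₂) * Equiv.ofBijective (f x₁) (hf x₁)
      = Equiv.ofBijective (f (f x₂ x₁)) (hf _) * Equiv.ofBijective (f (g x₁ x₂)) (hf _) :=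
    Equiv.ext fun w => hbr.f_f_eq hS w x₁ x₂
  simpa only [mul_inv_rev, Equiv.Perm.inv_def] using congrArg (·⁻¹) hf_mul

theorem lift_eq_one_of_mem_structGrpRels {X G : Type*} [Group G] {g f : X → X → X}
    {φ : X → G} (hφ : ∀ x y : X, φ x * φ y = φ (g x y) * φ (f y x)) :
    ∀ r ∈ structGrpRels g f, FreeGroup.lift φ r = 1 := by
  rintro r ⟨x, y, rfl⟩
  simp only [map_mul, map_inv, FreeGroup.lift_apply_of, hφ x y, mul_inv_cancel]

theorem stmt_3_general {X : Type*}
    (S : X × X → X × X) (g f : X → X → X)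
    (hS : ∀ x y : X, S (x, y) = (g x y, f y x))
    (hf : ∀ x : X, Function.Bijective (f x))
    (hbr : Braided S) :
    (∀ x₁ x₂ x₁' x₂' : X, S (x₁, x₂) = (x₁', x₂') →
        (Equiv.ofBijective (f x₁) (hf x₁)).symm * (Equiv.ofBijective (f x₂) (hf x₂)).symm
          = (Equiv.ofBijective (f x₁') (hf x₁')).symm *
              (Equiv.ofBijective (f x₂') (hf x₂')).symm) ∧
      ∃ Φ : PresentedGroup (structGrpRels g f) →* Equiv.Perm X,
        ∀ x : X, Φ (PresentedGroup.of x) = (Equiv.ofBijective (f x) (hf x)).symm := by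
  have hφ := fun x₁ x₂ x₁' x₂' (h : S (x₁, x₂) = (x₁', x₂')) =>
    hbr.ofBijective_symm_mul_ofBijective_symm hS hf h
  exact ⟨hφ, PresentedGroup.toGroup
    (lift_eq_one_of_mem_structGrpRels fun x y => hφ x y _ _ (hS x y)),
    fun _ => PresentedGroup.toGroup.of _⟩

/-- `x ↦ φ_x := f_x⁻¹` extends to a group homomorphism from the structure group
`G(X,S)` to the symmetric group on `X`; i.e. whenever `S(x₁,x₂) = (x₁′,x₂′)`,
`φ_{x₁} ∘ φ_{x₂} = φ_{x₁′} ∘ φ_{x₂′}`. -/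
theorem stmt_3 {X : Type*} [Fintype X]
    (S : X × X → X × X) (g f : X → X → X)
    (hS : ∀ x y : X, S (x, y) = (g x y, f y x))
    (hg : ∀ x : X, Function.Bijective (g x))
    (hf : ∀ x : X, Function.Bijective (f x))
    (hinv : ∀ p : X × X, S (S p) = p)
    (hbr : Braided S) :
    (∀ x₁ x₂ x₁' x₂' : X, S (x₁, x₂) = (x₁', x₂') →
        (Equiv.ofBijective (f x₁) (hf x₁)).symm * (Equiv.ofBijective (f x₂) (hf x₂)).symm
          = (Equiv.ofBijective (f x₁') (hf x₁')).symm *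
              (Equiv.ofBijective (f x₂') (hf x₂')).symm) ∧
      ∃ Φ : PresentedGroup (structGrpRels g f) →* Equiv.Perm X,
        ∀ x : X, Φ (PresentedGroup.of x) = (Equiv.ofBijective (f x) (hf x)).symm :=
  stmt_3_general S g f hS hf hbr
end

section
/- Let (X,S) be a non-degenerate symmetric set-theoretic solution on a finite set X, and let V be the real vector space with basis X. For x ∈ X define the linear map ψ_x : V → V by ψ_x(y) = φ_x(y) for y ≠ x and ψ_x(x) = −φ_x(x), where φ_x = f_x^{-1}. Then x ↦ ψ_x induces a group homomorphism ψ : G(X,S) → GL(V): whenever S(x₁,x₂) = (x₁′,x₂′), one has ψ_{x₁} ∘ ψ_{x₂} = ψ_{x₁′} ∘ ψ_{x₂′}. -/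
/-- The signed permutation matrix `ψ_x` on `V = ℝ^X`: the basis vector `y` is sent to
`φ_x(y) = f_x⁻¹(y)` when `y ≠ x`, and `x` is sent to `-φ_x(x)`. -/
noncomputable def psiMat {X : Type*} [DecidableEq X] [Nonempty X]
    (f : X → X → X) (x : X) : Matrix X X ℝ :=
  Matrix.of fun z y =>
    if z = Function.invFun (f x) y then (if y = x then (-1 : ℝ) else 1) else 0

open Matrix

section Aux

variable {X : Type*} [Fintype X] [DecidableEq X] [Nonempty X]

private lemma psi_mul_apply (f : X → X → X) (a b z y : X) :
    (psiMat f a * psiMat f b) z y =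
      if z = Function.invFun (f a) (Function.invFun (f b) y) then
        (if Function.invFun (f b) y = a then (-1:ℝ) else 1) *
          (if y = b then (-1:ℝ) else 1)
      else 0 := by
  rw [Matrix.mul_apply, Fintype.sum_eq_single (Function.invFun (f b) y)]
  · simp only [psiMat, Matrix.of_apply, if_pos rfl, ite_mul, mul_ite, mul_one, mul_neg, one_mul, neg_neg]
    split_ifs <;> ring
  · intro w hw
    simp [psiMat, hw]

private lemma key (S : X × X → X × X) (g f : X → X → X)
    (hS : ∀ x y : X, S (x, y) = (g x y, f y x))
    (hf : ∀ x : X, Function.Bijective (f x))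
    (hinv : ∀ p : X × X, S (S p) = p)
    (hbr : Braided S) (a b : X) :
    psiMat f a * psiMat f b = psiMat f (g a b) * psiMat f (f b a) := by
  have hri : ∀ x y, f x (Function.invFun (f x) y) = y :=
    fun x => Function.rightInverse_invFun (hf x).2
  have hli : ∀ x y, Function.invFun (f x) (f x y) = y :=
    fun x => Function.leftInverse_invFun (hf x).1
  have B3 : ∀ u : X, f b (f a u) = f (f b a) (f (g a b) u) := by
    intro u
    have h := congrFun hbr (u, a, b)
    simp only [Function.comp_apply, S12, S23, hS] at h
    exact congrArg (fun p => p.2.2) h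
  have hI := hinv (a, b)
  rw [hS a b, hS (g a b) (f b a)] at hI
  have hI2 : f (f b a) (g a b) = b := congrArg Prod.snd hI
  set a' := g a b with ha'
  set b' := f b a with hb'
  have hpos : ∀ y, Function.invFun (f a') (Function.invFun (f b') y)
      = Function.invFun (f a) (Function.invFun (f b) y) := by
    intro y
    have h1 : f b' (f a' (Function.invFun (f a) (Function.invFun (f b) y))) = y := by
      rw [← B3, hri, hri]
    have h2 : f a' (Function.invFun (f a) (Function.invFun (f b) y))
        = Function.invFun (f b') y := by
      have := congrArg (Function.invFun (f b')) h1
      rwa [hli] at this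
    have := congrArg (Function.invFun (f a')) h2
    rw [hli] at this
    exact this.symm
  have hc1 : ∀ y, (Function.invFun (f b) y = a) ↔ (y = b') := by
    intro y
    constructor
    · intro h; rw [← hri b y, h]
    · intro h; rw [h, hb']; exact hli b a
  have hc2 : ∀ y, (Function.invFun (f b') y = a') ↔ (y = b) := by
    intro y
    constructor
    · intro h
      have := congrArg (f b') h
      rw [hri] at this
      rw [this, hI2]
    · intro h; rw [h, ← hI2, hli]
  ext z y
  rw [psi_mul_apply, psi_mul_apply, hpos]
  simp only [hc1, hc2]
  split_ifs <;> ring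

private lemma psi_mul_transpose (f : X → X → X) (hf : ∀ x : X, Function.Bijective (f x))
    (x : X) : psiMat f x * (psiMat f x)ᵀ = 1 := by
  have hri : ∀ x y, f x (Function.invFun (f x) y) = y :=
    fun x => Function.rightInverse_invFun (hf x).2
  have hli : ∀ x y, Function.invFun (f x) (f x y) = y :=
    fun x => Function.leftInverse_invFun (hf x).1
  ext z y
  rw [Matrix.mul_apply, Fintype.sum_eq_single (f x z)]
  · simp only [psiMat, Matrix.transpose_apply, Matrix.of_apply, hli, Matrix.one_apply,
      if_pos rfl]
    by_cases hyz : y = z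
    · subst hyz
      simp only [if_pos rfl]
      split_ifs <;> ring
    · rw [if_neg hyz, if_neg (Ne.symm hyz), mul_zero]
  · intro w hw
    have hz : z ≠ Function.invFun (f x) w := by
      intro h
      exact hw (by rw [h, hri])
    simp [psiMat, hz]

private lemma psi_transpose_mul (f : X → X → X) (hf : ∀ x : X, Function.Bijective (f x))
    (x : X) : (psiMat f x)ᵀ * psiMat f x = 1 := by
  have hri : ∀ x y, f x (Function.invFun (f x) y) = y :=
    fun x => Function.rightInverse_invFun (hf x).2
  ext z y
  rw [Matrix.mul_apply, Fintype.sum_eq_single (Function.invFun (f x) z)]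
  · simp only [psiMat, Matrix.transpose_apply, Matrix.of_apply, Matrix.one_apply,
      if_pos rfl]
    by_cases hyz : z = y
    · subst hyz
      simp only [if_pos rfl]
      split_ifs <;> ring
    · have : Function.invFun (f x) z ≠ Function.invFun (f x) y := by
        intro h
        exact hyz (by rw [← hri x z, h, hri])
      rw [if_neg this, mul_zero, if_neg hyz]
  · intro w hw
    simp [psiMat, hw]

end Aux

/-- `x ↦ ψ_x` induces a linear representation `ψ : G(X,S) → GL(V)`; in particular
whenever `S(x₁,x₂) = (x₁′,x₂′)`, `ψ_{x₁} ∘ ψ_{x₂} = ψ_{x₁′} ∘ ψ_{x₂′}`. -/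
theorem stmt_4 {X : Type*} [Fintype X] [DecidableEq X] [Nonempty X]
    (S : X × X → X × X) (g f : X → X → X)
    (hS : ∀ x y : X, S (x, y) = (g x y, f y x))
    (hg : ∀ x : X, Function.Bijective (g x))
    (hf : ∀ x : X, Function.Bijective (f x))
    (hinv : ∀ p : X × X, S (S p) = p)
    (hbr : Braided S) :
    (∀ x₁ x₂ x₁' x₂' : X, S (x₁, x₂) = (x₁', x₂') →
        psiMat f x₁ * psiMat f x₂ = psiMat f x₁' * psiMat f x₂') ∧
      ∃ Ψ : PresentedGroup (structGrpRels g f) →* Matrix.GeneralLinearGroup X ℝ,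
        ∀ x : X, (Ψ (PresentedGroup.of x) : Matrix X X ℝ) = psiMat f x := by
  constructor
  · intro x₁ x₂ x₁' x₂' h
    have h' := (hS x₁ x₂).symm.trans h
    have h1 : x₁' = g x₁ x₂ := (congrArg Prod.fst h').symm
    have h2 : x₂' = f x₂ x₁ := (congrArg Prod.snd h').symm
    rw [h1, h2]
    exact key S g f hS hf hinv hbr x₁ x₂
  · let U : X → Matrix.GeneralLinearGroup X ℝ := fun x =>
      ⟨psiMat f x, (psiMat f x)ᵀ, psi_mul_transpose f hf x, psi_transpose_mul f hf x⟩
    have hrel : ∀ r ∈ structGrpRels g f, FreeGroup.lift U r = 1 := by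
      rintro r ⟨x, y, rfl⟩
      simp only [_root_.map_mul, _root_.map_inv, FreeGroup.lift_apply_of]
      rw [mul_inv_eq_one]
      exact Units.ext (key S g f hS hf hinv hbr x y)
    refine ⟨PresentedGroup.toGroup hrel, fun x => ?_⟩
    rw [PresentedGroup.toGroup.of]
end

section
/- Let M be a monoid of I-type with atom set X and Garside element Δ, associated to a non-degenerate symmetric solution (X,S). If a ∈ M is a divisor of Δ of length k (i.e., a simple element), then a has exactly k! distinct word representatives over X. -/
/-- The defining relations of the structure monoid: `x y = g_x(y) f_y(x)`. -/
def structRel {X : Type*} (g f : X → X → X) :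
    FreeMonoid X → FreeMonoid X → Prop :=
  fun a b => ∃ x y : X, a = FreeMonoid.of x * FreeMonoid.of y ∧
    b = FreeMonoid.of (g x y) * FreeMonoid.of (f y x)

/-!
Write `untwist g [x₁, x₂, x₃, …] = [x₁, g_{x₁} x₂, g_{x₁} (g_{x₂} x₃), …]`. This is a
length-preserving bijection of words, and since `S` is involutive and braided it turns each
defining relation `x y = g_x(y) f_y(x)` into a transposition of two adjacent letters, and
conversely every transposition comes from a relation. So the words representing `a` correspond
to the rearrangements of `untwist w`.

Every atom divides `Δ`, so `untwist` of a word for `Δ` contains every letter of `X`; the word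
whose image is an enumeration of `X` represents a common multiple of the atoms, so `Δ` has length
at most `|X|`. Hence `untwist` of a word for `Δ`, and of its prefix `w`, has no repeated letter,
and its `k` letters have exactly `k!` rearrangements.
-/

theorem List.Nodup.natCard_perm {α : Type*} {l : List α} (hl : l.Nodup) :
    Nat.card {l' : List α // l'.Perm l} = l.length.factorial := by
  classical
  rw [← List.length_permutations, ← List.toFinset_card_of_nodup (List.nodup_permutations l hl),
    ← Nat.card_eq_finsetCard]
  exact Nat.card_congr <| Equiv.subtypeEquivRight fun l' => by
    rw [List.mem_toFinset, List.mem_permutations]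

theorem List.nodup_of_forall_mem_of_length_le {α : Type*} [Fintype α] {l : List α}
    (hmem : ∀ x, x ∈ l) (hl : l.length ≤ Fintype.card α) : l.Nodup := by
  classical
  have huniv : l.toFinset = Finset.univ := Finset.eq_univ_iff_forall.2 fun x => by simp [hmem x]
  refine Multiset.coe_nodup.1 (Multiset.toFinset_card_eq_card_iff_nodup.1 ?_)
  exact le_antisymm (List.toFinset_card_le l) (by simpa [huniv] using hl)

namespace StructureMonoid

open PresentedMonoid

variable {X : Type*}

def untwist (g : X → X → X) : List X → List X
  | [] => []
  | x :: w => x :: (untwist g w).map (g x)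

def twistAct (g : X → X → X) : List X → X → X
  | [] => id
  | x :: w => g x ∘ twistAct g w

section Untwist

variable (g : X → X → X)

@[simp]
theorem length_untwist : ∀ w : List X, (untwist g w).length = w.length
  | [] => rfl
  | x :: w => by simp [untwist, length_untwist w]

theorem twistAct_append : ∀ u v : List X, twistAct g (u ++ v) = twistAct g u ∘ twistAct g v
  | [], _ => rfl
  | x :: u, v => by simp [twistAct, twistAct_append u v, Function.comp_assoc]

theorem untwist_append :
    ∀ u v : List X, untwist g (u ++ v) = untwist g u ++ (untwist g v).map (twistAct g u)
  | [], v => by simp [untwist, twistAct]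
  | x :: u, v => by simp [untwist, twistAct, untwist_append u v, Function.comp_def]

theorem untwist_injective (hg : ∀ x, Function.Injective (g x)) :
    Function.Injective (untwist g)
  | [], [], _ => rfl
  | [], _ :: _, h | _ :: _, [], h => by simp [untwist] at h
  | x :: u, y :: v, h => by
    obtain ⟨rfl, h⟩ : x = y ∧ (untwist g u).map (g x) = (untwist g v).map (g y) := by
      simpa [untwist] using h
    rw [untwist_injective hg (List.map_injective_iff.2 (hg x) h)]

theorem exists_untwist_eq_map (hg : ∀ x, Function.Bijective (g x)) :
    ∀ (l : List X) (σ : X ≃ X), ∃ u, untwist g u = l.map σ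
  | [], _ => ⟨[], rfl⟩
  | x :: l, σ => by
    let e := Equiv.ofBijective (g (σ x)) (hg (σ x))
    obtain ⟨u, hu⟩ := exists_untwist_eq_map hg l (σ.trans e.symm)
    refine ⟨σ x :: u, ?_⟩
    simp only [untwist, hu, List.map_map, List.map_cons]
    congr 1
    exact List.map_congr_left fun y _ => e.apply_symm_apply (σ y)

theorem untwist_surjective (hg : ∀ x, Function.Bijective (g x)) :
    Function.Surjective (untwist g) := fun l => by
  simpa using exists_untwist_eq_map g hg l (Equiv.refl X)

end Untwist

section Relations

variable {g f : X → X → X}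

theorem g_g_f_of_involutive {S : X × X → X × X} (hS : ∀ x y, S (x, y) = (g x y, f y x))
    (hinv : ∀ p, S (S p) = p) (x y : X) : g (g x y) (f y x) = x := by
  simpa [hS] using congrArg Prod.fst (hinv (x, y))

theorem g_comp_g_of_braided {S : X × X → X × X} (hS : ∀ x y, S (x, y) = (g x y, f y x))
    (hbr : Braided S) (x y : X) : g (g x y) ∘ g (f y x) = g x ∘ g y :=
  funext fun z => by
    simpa [S12, S23, hS] using congrArg Prod.fst (congrFun hbr (x, y, z))

/-- `twistAct` is carried along because `untwist_append` makes the `mul` case depend on it. -/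
theorem untwist_perm_and_twistAct_eq_of_rel (hinvol : ∀ x y, g (g x y) (f y x) = x)
    (hcyc : ∀ x y, g (g x y) ∘ g (f y x) = g x ∘ g y) {u v : FreeMonoid X}
    (h : ConGen.Rel (structRel g f) u v) :
    (untwist g u.toList).Perm (untwist g v.toList) ∧
      twistAct g u.toList = twistAct g v.toList := by
  induction h with
  | of _ _ hr =>
    obtain ⟨x, y, rfl, rfl⟩ := hr
    refine ⟨?_, (hcyc x y).symm⟩
    simpa [untwist, hinvol] using List.Perm.swap (g x y) x []
  | refl => exact ⟨.refl _, rfl⟩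
  | symm _ ih => exact ⟨ih.1.symm, ih.2.symm⟩
  | trans _ _ ih₁ ih₂ => exact ⟨ih₁.1.trans ih₂.1, ih₁.2.trans ih₂.2⟩
  | mul _ _ ih₁ ih₂ =>
    simp only [FreeMonoid.toList_mul, untwist_append, twistAct_append, ih₁.2, ih₂.2, and_true]
    exact ih₁.1.append (ih₂.1.map _)

/-- The relabelling `σ` makes the induction go through: removing the first letter `x` of `u`
relabels the rest of `untwist g u` by `g_x⁻¹`. -/
theorem exists_untwist_eq_map_of_perm (hg : ∀ x, Function.Bijective (g x))
    (hinvol : ∀ x y, g (g x y) (f y x) = x) (hcyc : ∀ x y, g (g x y) ∘ g (f y x) = g x ∘ g y)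
    {l l' : List X} (h : l.Perm l') (σ : X ≃ X) (u : List X) (hu : untwist g u = l.map σ) :
    ∃ v, untwist g v = l'.map σ ∧
      mk (structRel g f) (FreeMonoid.ofList u) = mk (structRel g f) (FreeMonoid.ofList v) := by
  induction h generalizing σ u with
  | nil => exact ⟨u, hu, rfl⟩
  | @cons x l₁ _ _ ih =>
    obtain _ | ⟨p, u⟩ := u
    · simp [untwist] at hu
    obtain ⟨rfl, hu⟩ : p = σ x ∧ (untwist g u).map (g p) = _ := by simpa [untwist] using hu
    let e := Equiv.ofBijective (g (σ x)) (hg (σ x))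
    have hu' : untwist g u = l₁.map (σ.trans e.symm) := by
      rw [Equiv.coe_trans, ← List.map_map, ← hu, List.map_map]
      exact ((List.map_congr_left fun y _ => e.symm_apply_apply y).trans (List.map_id _)).symm
    obtain ⟨v, hv, hrel⟩ := ih (σ.trans e.symm) u hu'
    refine ⟨σ x :: v, ?_, ?_⟩
    · simp only [untwist, hv, List.map_map, List.map_cons]
      exact congrArg _ (List.map_congr_left fun y _ => e.apply_symm_apply (σ y))
    · simp only [FreeMonoid.ofList_cons, map_mul, hrel]
  | swap x y l =>
    obtain _ | ⟨p, _ | ⟨q, u⟩⟩ := u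
    · simp [untwist] at hu
    · simp [untwist] at hu
    obtain ⟨rfl, hq, hu⟩ : p = σ y ∧ g p q = σ x ∧
        (untwist g u).map (g p ∘ g q) = l.map σ := by
      simpa [untwist] using hu
    refine ⟨g (σ y) q :: f q (σ y) :: u, ?_, ?_⟩
    · simp [untwist, ← hq, hinvol, hcyc, hu]
    · change mk _ (FreeMonoid.of _ * FreeMonoid.of _ * FreeMonoid.ofList u) =
        mk _ (FreeMonoid.of _ * FreeMonoid.of _ * FreeMonoid.ofList u)
      rw [map_mul, map_mul _ (_ * _), mk_eq_mk_of_rel ⟨σ y, q, rfl, rfl⟩]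
  | trans _ _ ih₁ ih₂ =>
    obtain ⟨v, hv, hrel₁⟩ := ih₁ σ u hu
    obtain ⟨w, hw, hrel₂⟩ := ih₂ σ v hv
    exact ⟨w, hw, hrel₁.trans hrel₂⟩

theorem untwist_perm_of_mk_eq (hinvol : ∀ x y, g (g x y) (f y x) = x)
    (hcyc : ∀ x y, g (g x y) ∘ g (f y x) = g x ∘ g y) {u v : FreeMonoid X}
    (h : mk (structRel g f) u = mk (structRel g f) v) :
    (untwist g u.toList).Perm (untwist g v.toList) :=
  (untwist_perm_and_twistAct_eq_of_rel hinvol hcyc (mk_eq_mk_iff.1 h)).1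

theorem length_le_of_mk_dvd (hinvol : ∀ x y, g (g x y) (f y x) = x)
    (hcyc : ∀ x y, g (g x y) ∘ g (f y x) = g x ∘ g y) {u v : FreeMonoid X}
    (h : mk (structRel g f) u ∣ mk (structRel g f) v) : u.length ≤ v.length := by
  obtain ⟨c, hc⟩ := h
  obtain ⟨z, rfl⟩ := surjective_mk c
  rw [← map_mul] at hc
  have hlen := (untwist_perm_of_mk_eq hinvol hcyc hc).length_eq
  simp only [length_untwist] at hlen
  change v.length = (u * z).length at hlen
  rw [hlen, FreeMonoid.length_mul]
  exact Nat.le_add_right _ _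

theorem mem_untwist_of_of_dvd (hinvol : ∀ x y, g (g x y) (f y x) = x)
    (hcyc : ∀ x y, g (g x y) ∘ g (f y x) = g x ∘ g y) {x : X} {u : FreeMonoid X}
    (h : of (structRel g f) x ∣ mk (structRel g f) u) : x ∈ untwist g u.toList := by
  obtain ⟨c, hc⟩ := h
  obtain ⟨t, rfl⟩ := surjective_mk c
  rw [of, ← map_mul] at hc
  refine (untwist_perm_of_mk_eq hinvol hcyc hc).mem_iff.2 ?_
  simp [untwist]

theorem of_dvd_of_mem_untwist (hg : ∀ x, Function.Bijective (g x))
    (hinvol : ∀ x y, g (g x y) (f y x) = x) (hcyc : ∀ x y, g (g x y) ∘ g (f y x) = g x ∘ g y)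
    {x : X} {u : List X} (h : x ∈ untwist g u) :
    of (structRel g f) x ∣ mk (structRel g f) (FreeMonoid.ofList u) := by
  classical
  obtain ⟨v, hv, hrel⟩ := exists_untwist_eq_map_of_perm hg hinvol hcyc
    (List.perm_cons_erase h) (Equiv.refl X) u (List.map_id _).symm
  obtain _ | ⟨p, t⟩ := v
  · simp [untwist] at hv
  obtain rfl : p = x := by simp_all [untwist]
  exact ⟨mk _ (FreeMonoid.ofList t), by rw [hrel]; rfl⟩

theorem natCard_mk_eq (hg : ∀ x, Function.Bijective (g x))
    (hinvol : ∀ x y, g (g x y) (f y x) = x) (hcyc : ∀ x y, g (g x y) ∘ g (f y x) = g x ∘ g y)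
    (w : FreeMonoid X) :
    Nat.card {u : FreeMonoid X // mk (structRel g f) u = mk (structRel g f) w} =
      Nat.card {l : List X // l.Perm (untwist g w.toList)} := by
  refine Nat.card_eq_of_bijective
    (fun u => ⟨untwist g u.1.toList, untwist_perm_of_mk_eq hinvol hcyc u.2⟩) ⟨?_, ?_⟩
  · intro u v h
    exact Subtype.ext <| FreeMonoid.toList.injective <|
      untwist_injective g (fun x => (hg x).1) (congrArg Subtype.val h)
  · rintro ⟨l, hl⟩
    obtain ⟨v, hv, hrel⟩ := exists_untwist_eq_map_of_perm hg hinvol hcyc hl.symm (Equiv.refl X)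
      w.toList (List.map_id _).symm
    exact ⟨⟨FreeMonoid.ofList v, hrel.symm⟩, Subtype.ext (hv.trans (List.map_id _))⟩

theorem nodup_untwist_of_dvd_lcm [Fintype X] (hg : ∀ x, Function.Bijective (g x))
    (hinvol : ∀ x y, g (g x y) (f y x) = x) (hcyc : ∀ x y, g (g x y) ∘ g (f y x) = g x ∘ g y)
    {Δ : PresentedMonoid (structRel g f)} (hΔdvd : ∀ x, of (structRel g f) x ∣ Δ)
    (hΔlcm : ∀ m, (∀ x, of (structRel g f) x ∣ m) → Δ ∣ m)
    {w : FreeMonoid X} (hw : mk (structRel g f) w ∣ Δ) : (untwist g w.toList).Nodup := by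
  obtain ⟨c, rfl⟩ := hw
  obtain ⟨z, rfl⟩ := surjective_mk c
  rw [← map_mul] at hΔdvd hΔlcm
  obtain ⟨v, hv⟩ := untwist_surjective g hg Finset.univ.toList
  have hv_dvd : ∀ x, of (structRel g f) x ∣ mk (structRel g f) (FreeMonoid.ofList v) :=
    fun x => of_dvd_of_mem_untwist hg hinvol hcyc (by simp [hv])
  have hlen : (w * z).length ≤ v.length := length_le_of_mk_dvd hinvol hcyc (hΔlcm _ hv_dvd)
  have hnd : (untwist g (w * z).toList).Nodup := by
    refine List.nodup_of_forall_mem_of_length_le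
      (fun x => mem_untwist_of_of_dvd hinvol hcyc (hΔdvd x)) ?_
    have hv_len : v.length = Fintype.card X := by simpa using congrArg List.length hv
    exact (length_untwist g _).trans_le (hlen.trans hv_len.le)
  rw [FreeMonoid.toList_mul, untwist_append] at hnd
  exact hnd.of_append_left

end Relations

end StructureMonoid

open StructureMonoid in
theorem stmt_6_general {X : Type*} [Fintype X]
    (S : X × X → X × X) (g f : X → X → X)
    (hS : ∀ x y : X, S (x, y) = (g x y, f y x))
    (hg : ∀ x : X, Function.Bijective (g x))
    (hinv : ∀ p : X × X, S (S p) = p)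
    (hbr : Braided S)
    (Δ : PresentedMonoid (structRel g f))
    (hΔdvd : ∀ x : X, PresentedMonoid.of (structRel g f) x ∣ Δ)
    (hΔlcm : ∀ m : PresentedMonoid (structRel g f),
      (∀ x : X, PresentedMonoid.of (structRel g f) x ∣ m) → Δ ∣ m)
    (a : PresentedMonoid (structRel g f)) (ha : a ∣ Δ)
    (k : ℕ) (w : FreeMonoid X)
    (hw : PresentedMonoid.mk (structRel g f) w = a) (hk : w.length = k) :
    Nat.card {u : FreeMonoid X // PresentedMonoid.mk (structRel g f) u = a}
      = Nat.factorial k := by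
  have hinvol := g_g_f_of_involutive hS hinv
  have hcyc := g_comp_g_of_braided hS hbr
  subst hw hk
  have hnd := nodup_untwist_of_dvd_lcm hg hinvol hcyc hΔdvd hΔlcm ha
  rw [natCard_mk_eq hg hinvol hcyc, hnd.natCard_perm, length_untwist]
  rfl

/-- in the structure monoid `M(X,S)` (a Garside monoid whose Garside element `Δ`
is the right lcm of `X`), a simple element (divisor of `Δ`) of length `k` has exactly `k!`
word representatives over `X`. -/
theorem stmt_6 {X : Type*} [Fintype X]
    (S : X × X → X × X) (g f : X → X → X)
    (hS : ∀ x y : X, S (x, y) = (g x y, f y x))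
    (hg : ∀ x : X, Function.Bijective (g x))
    (hf : ∀ x : X, Function.Bijective (f x))
    (hinv : ∀ p : X × X, S (S p) = p)
    (hbr : Braided S)
    (Δ : PresentedMonoid (structRel g f))
    (hΔdvd : ∀ x : X, PresentedMonoid.of (structRel g f) x ∣ Δ)
    (hΔlcm : ∀ m : PresentedMonoid (structRel g f),
      (∀ x : X, PresentedMonoid.of (structRel g f) x ∣ m) → Δ ∣ m)
    (a : PresentedMonoid (structRel g f)) (ha : a ∣ Δ)
    (k : ℕ) (w : FreeMonoid X)
    (hw : PresentedMonoid.mk (structRel g f) w = a) (hk : w.length = k) :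
    Nat.card {u : FreeMonoid X // PresentedMonoid.mk (structRel g f) u = a}
      = Nat.factorial k :=
  stmt_6_general S g f hS hg hinv hbr Δ hΔdvd hΔlcm a ha k w hw hk
end

section
/- Let M(X,S) be the structure monoid of a non-degenerate symmetric solution with |X| = n and Garside element Δ. Then the number of simple elements (divisors of Δ) of length k equals the binomial coefficient C(n,k); consequently the set of divisors of Δ has cardinality 2^n. -/
/-- `a` has length `k` in the structure monoid (the presentation is homogeneous, so the length
of any word representative computes it). -/
def HasLen {X : Type*} (g f : X → X → X)
    (a : PresentedMonoid (structRel g f)) (k : ℕ) : Prop :=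
  ∃ w : FreeMonoid X, PresentedMonoid.mk (structRel g f) w = a ∧ w.length = k

/-! The cocycle `x ↦ (eₓ, gₓ)` into `ℕ^X ⋊ Sym(X)` respects the defining relations, and its
vector part `vec` is a bijection `M(X,S) → ℕ^X` that turns left divisibility into the pointwise
order and length into the coordinate sum: wherever `vec a` is positive at `x`, the atom `x` can
be moved to the front of a word for `a` using the relations. As `Δ` is the lcm of the atoms,
`vec Δ = 1`, so the divisors of `Δ` correspond to the `0/1`-vectors, i.e. to the subsets of
`X`, with length equal to cardinality. -/

/-- The monoid `ℕ^X ⋊ Sym(X)`. -/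
@[ext]
structure NatVecPerm (X : Type*) where
  vec : X → ℕ
  perm : Equiv.Perm X

namespace NatVecPerm

variable {X : Type*}

instance : Mul (NatVecPerm X) :=
  ⟨fun a b => ⟨a.vec + b.vec ∘ a.perm.symm, a.perm * b.perm⟩⟩

instance : One (NatVecPerm X) := ⟨⟨0, 1⟩⟩

@[simp] lemma vec_mul (a b : NatVecPerm X) : (a * b).vec = a.vec + b.vec ∘ a.perm.symm := rfl
@[simp] lemma perm_mul (a b : NatVecPerm X) : (a * b).perm = a.perm * b.perm := rfl
@[simp] lemma vec_one : (1 : NatVecPerm X).vec = 0 := rfl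
@[simp] lemma perm_one : (1 : NatVecPerm X).perm = 1 := rfl

instance : Monoid (NatVecPerm X) where
  mul_assoc a b c := by ext <;> simp [add_assoc, Equiv.Perm.mul_def]
  one_mul a := by ext <;> simp [Equiv.Perm.one_def]
  mul_one a := by ext <;> simp

end NatVecPerm

@[simp] lemma PresentedMonoid.mk_of {α : Type*} (rels : FreeMonoid α → FreeMonoid α → Prop)
    (x : α) : PresentedMonoid.mk rels (FreeMonoid.of x) = PresentedMonoid.of rels x := rfl

section

variable {X : Type*}

lemma Pi.single_one_comp_symm [DecidableEq X] (σ : Equiv.Perm X) (x : X) :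
    (Pi.single x 1 : X → ℕ) ∘ σ.symm = Pi.single (σ x) 1 := by
  ext y
  simp [Pi.single_apply, Equiv.symm_apply_eq]

lemma of_mul_of_structRel {g f : X → X → X} (x y : X) :
    PresentedMonoid.of (structRel g f) x * PresentedMonoid.of (structRel g f) y
      = PresentedMonoid.of (structRel g f) (g x y)
        * PresentedMonoid.of (structRel g f) (f y x) :=
  PresentedMonoid.mk_eq_mk_of_rel ⟨x, y, rfl, rfl⟩

/-- The identities making `x ↦ (eₓ, gₓ)` compatible with the relations `x y = g_x(y) f_y(x)`. -/
structure IsCocycleData (g f : X → X → X) : Prop where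
  bijective : ∀ x, Function.Bijective (g x)
  g_g_f : ∀ x y, g (g x y) (f y x) = x
  g_g : ∀ x y z, g x (g y z) = g (g x y) (g (f y x) z)

theorem IsCocycleData.of_braided {g f : X → X → X} {S : X × X → X × X}
    (hS : ∀ x y, S (x, y) = (g x y, f y x)) (hg : ∀ x, Function.Bijective (g x))
    (hinv : ∀ p, S (S p) = p) (hbr : Braided S) : IsCocycleData g f where
  bijective := hg
  g_g_f x y := by simpa [hS] using congrArg Prod.fst (hinv (x, y))
  g_g x y z := by simpa [S12, S23, hS] using (congrArg Prod.fst (congrFun hbr (x, y, z))).symm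

namespace IsCocycleData

variable {g f : X → X → X} (h : IsCocycleData g f)

noncomputable def perm (x : X) : Equiv.Perm X := Equiv.ofBijective (g x) (h.bijective x)

@[simp] lemma perm_apply (x y : X) : h.perm x y = g x y := rfl

variable [DecidableEq X]

noncomputable def cocycle : PresentedMonoid (structRel g f) →* NatVecPerm X :=
  PresentedMonoid.lift (fun x => ⟨Pi.single x 1, h.perm x⟩) <| by
    rintro _ _ ⟨x, y, rfl, rfl⟩
    ext z
    · simp [Pi.single_one_comp_symm, h.g_g_f, add_comm]
    · simpa using h.g_g x y z

noncomputable def vec (a : PresentedMonoid (structRel g f)) : X → ℕ := (h.cocycle a).vec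

local notation "ι" => PresentedMonoid.of (structRel g f)

lemma vec_mul (a b : PresentedMonoid (structRel g f)) :
    h.vec (a * b) = h.vec a + h.vec b ∘ (h.cocycle a).perm.symm := by
  simp [vec]

@[simp] lemma vec_one : h.vec 1 = 0 := by simp [vec]

@[simp] lemma vec_of (x : X) : h.vec (ι x) = Pi.single x 1 := rfl

lemma vec_of_mul_apply (x y : X) (a : PresentedMonoid (structRel g f)) :
    h.vec (ι x * a) (g x y) = (Pi.single x 1 : X → ℕ) (g x y) + h.vec a y := by
  rw [vec_mul, ← h.perm_apply]
  simp only [Pi.add_apply, Function.comp_apply, vec_of]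
  rw [show (h.cocycle (ι x)).perm = h.perm x from rfl, Equiv.symm_apply_apply]

lemma vec_le_of_dvd {a b : PresentedMonoid (structRel g f)} (hab : a ∣ b) :
    h.vec a ≤ h.vec b := by
  obtain ⟨c, rfl⟩ := hab
  simp [vec_mul]

lemma of_dvd_iff {x : X} {a : PresentedMonoid (structRel g f)} : ι x ∣ a ↔ 0 < h.vec a x := by
  refine ⟨fun hx => (by simpa using h.vec_le_of_dvd hx x : 1 ≤ h.vec a x), fun hx => ?_⟩
  obtain ⟨w, rfl⟩ := PresentedMonoid.surjective_mk a
  induction w using FreeMonoid.inductionOn' generalizing x with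
  | one => simp at hx
  | of_mul y w ih =>
    rw [map_mul, PresentedMonoid.mk_of] at hx ⊢
    obtain rfl | hxy := eq_or_ne x y
    · exact dvd_mul_right _ _
    -- `x = g_y(x')` with `x' ∣ w`, and `y x' = g_y(x') f_{x'}(y)` brings `x` to the front
    obtain ⟨x, rfl⟩ := (h.bijective y).2 x
    rw [vec_of_mul_apply, Pi.single_eq_of_ne hxy, zero_add] at hx
    obtain ⟨c, hc⟩ := ih hx
    exact ⟨ι (f x y) * c, by rw [hc, ← mul_assoc, of_mul_of_structRel, mul_assoc]⟩

lemma dvd_of_vec_le {a b : PresentedMonoid (structRel g f)} (hab : h.vec a ≤ h.vec b) :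
    a ∣ b := by
  obtain ⟨w, rfl⟩ := PresentedMonoid.surjective_mk a
  induction w using FreeMonoid.inductionOn' generalizing b with
  | one => simp
  | of_mul x w ih =>
    rw [map_mul, PresentedMonoid.mk_of] at hab ⊢
    have hx : 0 < h.vec (ι x * PresentedMonoid.mk _ w) x := h.of_dvd_iff.mp (dvd_mul_right _ _)
    obtain ⟨b, rfl⟩ := h.of_dvd_iff.mpr (hx.trans_le (hab x))
    refine mul_dvd_mul_left _ (ih fun y => ?_)
    simpa [vec_of_mul_apply] using hab (g x y)

open scoped Classical in
lemma vec_eq_ite_of_dvd {Δ a : PresentedMonoid (structRel g f)} (hΔ : h.vec Δ = 1)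
    (ha : a ∣ Δ) (x : X) : h.vec a x = if ι x ∣ a then 1 else 0 := by
  have hle : h.vec a x ≤ 1 := by simpa [hΔ] using h.vec_le_of_dvd ha x
  rw [h.of_dvd_iff]
  split_ifs <;> omega

variable [Fintype X]

lemma sum_vec_mul (a b : PresentedMonoid (structRel g f)) :
    ∑ y, h.vec (a * b) y = ∑ y, h.vec a y + ∑ y, h.vec b y := by
  simp [vec_mul, Finset.sum_add_distrib, Equiv.sum_comp]

lemma sum_vec_mk (w : FreeMonoid X) : ∑ y, h.vec (PresentedMonoid.mk _ w) y = w.length := by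
  induction w using FreeMonoid.inductionOn' with
  | one => simp
  | of_mul x w ih =>
    rw [map_mul, sum_vec_mul, ih]
    simp [add_comm]

lemma hasLen_iff (a : PresentedMonoid (structRel g f)) (k : ℕ) :
    HasLen g f a k ↔ ∑ y, h.vec a y = k := by
  obtain ⟨w, rfl⟩ := PresentedMonoid.surjective_mk a
  constructor
  · rintro ⟨w', hw', rfl⟩
    rw [← hw', sum_vec_mk]
  · intro hk
    exact ⟨w, rfl, by rw [← hk, sum_vec_mk]⟩

lemma eq_one_of_sum_vec_eq_zero {a : PresentedMonoid (structRel g f)}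
    (ha : ∑ y, h.vec a y = 0) : a = 1 := by
  obtain ⟨w, rfl⟩ := PresentedMonoid.surjective_mk a
  rw [sum_vec_mk, FreeMonoid.length_eq_zero] at ha
  rw [ha, map_one]

lemma vec_injective : Function.Injective h.vec := by
  intro a b hab
  obtain ⟨c, rfl⟩ := h.dvd_of_vec_le hab.le
  have hc : ∑ y, h.vec c y = 0 := by
    have := h.sum_vec_mul a c
    rw [← hab] at this
    omega
  rw [h.eq_one_of_sum_vec_eq_zero hc, mul_one]

lemma vec_surjective : Function.Surjective h.vec := by
  intro v
  obtain ⟨m, rfl⟩ : ∃ m : Multiset X, (fun y => m.count y) = v :=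
    ⟨Finsupp.toMultiset (Finsupp.equivFunOnFinite.symm v), by ext; simp⟩
  induction m using Multiset.induction_on with
  | empty => exact ⟨1, by ext; simp⟩
  | cons x m ih =>
    obtain ⟨a, ha⟩ := ih
    refine ⟨a * ι ((h.cocycle a).perm.symm x), ?_⟩
    ext y
    simp [vec_mul, ha, Pi.single_one_comp_symm, Multiset.count_cons, Pi.single_apply]

lemma vec_eq_one_of_isLCM {Δ : PresentedMonoid (structRel g f)} (hΔdvd : ∀ x, ι x ∣ Δ)
    (hΔlcm : ∀ m, (∀ x, ι x ∣ m) → Δ ∣ m) : h.vec Δ = 1 := by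
  obtain ⟨b, hb⟩ := h.vec_surjective 1
  have hΔb : Δ ∣ b := hΔlcm b fun x => h.of_dvd_iff.mpr (by simp [hb])
  ext x
  have hle : h.vec Δ x ≤ 1 := by simpa [hb] using h.vec_le_of_dvd hΔb x
  have hpos := h.of_dvd_iff.mp (hΔdvd x)
  rw [Pi.one_apply]
  omega

open scoped Classical in
lemma bijective_filter_of_dvd {Δ : PresentedMonoid (structRel g f)} (hΔ : h.vec Δ = 1) :
    Function.Bijective fun a : {a // a ∣ Δ} => Finset.univ.filter fun x => ι x ∣ a.1 := by
  constructor
  · rintro ⟨a, ha⟩ ⟨b, hb⟩ hab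
    refine Subtype.ext (h.vec_injective (funext fun x => ?_))
    have hx : ι x ∣ a ↔ ι x ∣ b := by simpa using Finset.ext_iff.mp hab x
    rw [h.vec_eq_ite_of_dvd hΔ ha, h.vec_eq_ite_of_dvd hΔ hb, if_congr hx rfl rfl]
  · intro A
    obtain ⟨a, ha⟩ := h.vec_surjective fun x => if x ∈ A then 1 else 0
    refine ⟨⟨a, h.dvd_of_vec_le fun x => ?_⟩, Finset.ext fun x => ?_⟩ <;>
      by_cases hx : x ∈ A <;> simp [h.of_dvd_iff, ha, hΔ, hx]

open scoped Classical in
lemma card_filter_of_dvd {Δ a : PresentedMonoid (structRel g f)} (hΔ : h.vec Δ = 1)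
    (ha : a ∣ Δ) : (Finset.univ.filter fun x => ι x ∣ a).card = ∑ y, h.vec a y := by
  rw [Finset.card_filter]
  exact Finset.sum_congr rfl fun x _ => (h.vec_eq_ite_of_dvd hΔ ha x).symm

end IsCocycleData

end

theorem stmt_7_general {X : Type*} [Fintype X]
    (S : X × X → X × X) (g f : X → X → X)
    (hS : ∀ x y : X, S (x, y) = (g x y, f y x))
    (hg : ∀ x : X, Function.Bijective (g x))
    (hinv : ∀ p : X × X, S (S p) = p)
    (hbr : Braided S)
    (Δ : PresentedMonoid (structRel g f))
    (hΔdvd : ∀ x : X, PresentedMonoid.of (structRel g f) x ∣ Δ)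
    (hΔlcm : ∀ m : PresentedMonoid (structRel g f),
      (∀ x : X, PresentedMonoid.of (structRel g f) x ∣ m) → Δ ∣ m) :
    (∀ k : ℕ,
        Nat.card {a : PresentedMonoid (structRel g f) // a ∣ Δ ∧ HasLen g f a k}
          = (Fintype.card X).choose k) ∧
      Nat.card {a : PresentedMonoid (structRel g f) // a ∣ Δ} = 2 ^ Fintype.card X := by
  classical
  have h : IsCocycleData g f := .of_braided hS hg hinv hbr
  have hΔ := h.vec_eq_one_of_isLCM hΔdvd hΔlcm
  let e := Equiv.ofBijective _ (h.bijective_filter_of_dvd hΔ)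
  refine ⟨fun k => ?_, by rw [Nat.card_congr e, Nat.card_eq_fintype_card, Fintype.card_finset]⟩
  rw [← Fintype.card_finset_len, ← Nat.card_eq_fintype_card]
  refine Nat.card_congr <| (Equiv.subtypeSubtypeEquivSubtypeInter _ _).symm.trans <|
    e.subtypeEquiv fun a => ?_
  rw [h.hasLen_iff, Equiv.ofBijective_apply, h.card_filter_of_dvd hΔ a.2]

/-- the number of simple elements (divisors of the Garside element `Δ`) of length
`k` in `M(X,S)` is `C(n,k)`, where `n = |X|`; consequently the set of divisors of `Δ` has
cardinality `2^n`. -/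
theorem stmt_7 {X : Type*} [Fintype X]
    (S : X × X → X × X) (g f : X → X → X)
    (hS : ∀ x y : X, S (x, y) = (g x y, f y x))
    (hg : ∀ x : X, Function.Bijective (g x))
    (hf : ∀ x : X, Function.Bijective (f x))
    (hinv : ∀ p : X × X, S (S p) = p)
    (hbr : Braided S)
    (Δ : PresentedMonoid (structRel g f))
    (hΔdvd : ∀ x : X, PresentedMonoid.of (structRel g f) x ∣ Δ)
    (hΔlcm : ∀ m : PresentedMonoid (structRel g f),
      (∀ x : X, PresentedMonoid.of (structRel g f) x ∣ m) → Δ ∣ m) :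
    (∀ k : ℕ,
        Nat.card {a : PresentedMonoid (structRel g f) // a ∣ Δ ∧ HasLen g f a k}
          = (Fintype.card X).choose k) ∧
      Nat.card {a : PresentedMonoid (structRel g f) // a ∣ Δ} = 2 ^ Fintype.card X :=
  stmt_7_general S g f hS hg hinv hbr Δ hΔdvd hΔlcm
end

section
/- Let M(X,S) be the structure monoid of a non-degenerate symmetric solution with Garside element Δ. An element a ∈ M(X,S) is a divisor of Δ if and only if no word representative of a contains a frozen word xy (with S(x,y) = (x,y)) as a subword of two consecutive letters. -/
namespace Stmt8Aux

/-- The invariant monoid: multisets over `X` twisted by self-maps of `X`. -/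
@[ext]
structure K (X : Type*) where
  d : Multiset X
  p : X → X

instance (X : Type*) : One (K X) := ⟨⟨0, id⟩⟩
instance (X : Type*) : Mul (K X) := ⟨fun a b => ⟨a.d + b.d.map a.p, a.p ∘ b.p⟩⟩

@[simp] theorem K.mul_d {X : Type*} (a b : K X) : (a * b).d = a.d + b.d.map a.p := rfl
@[simp] theorem K.mul_p {X : Type*} (a b : K X) : (a * b).p = a.p ∘ b.p := rfl
@[simp] theorem K.one_d {X : Type*} : (1 : K X).d = 0 := rfl
@[simp] theorem K.one_p {X : Type*} : (1 : K X).p = id := rfl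

instance (X : Type*) : Monoid (K X) where
  mul_assoc a b c := by
    ext <;> simp [Multiset.map_add, Multiset.map_map, add_assoc]
  one_mul a := by ext <;> simp [Multiset.map_id]
  mul_one a := by ext <;> simp

variable {X : Type*} (g f : X → X → X)

/-- The twisted "content" multiset of a word. -/
def DW : List X → Multiset X
  | [] => 0
  | x :: l => x ::ₘ (DW l).map (g x)

/-- The permutation associated to a word. -/
def PW : List X → X → X
  | [] => id
  | x :: l => g x ∘ PW l

@[simp] theorem DW_nil : DW g [] = 0 := rfl
@[simp] theorem DW_cons (x : X) (l : List X) :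
    DW g (x :: l) = x ::ₘ (DW g l).map (g x) := rfl
@[simp] theorem PW_nil : PW g [] = id := rfl
@[simp] theorem PW_cons (x : X) (l : List X) : PW g (x :: l) = g x ∘ PW g l := rfl

theorem DW_append (u v : List X) :
    DW g (u ++ v) = DW g u + (DW g v).map (PW g u) := by
  induction u with
  | nil => simp
  | cons x u ih => simp [ih, Multiset.map_add, Multiset.map_map, Function.comp_def]

theorem card_DW (l : List X) : Multiset.card (DW g l) = l.length := by
  induction l with
  | nil => rfl
  | cons x l ih => simp [ih]

theorem PW_bijective (hg : ∀ x : X, Function.Bijective (g x)) (l : List X) :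
    Function.Bijective (PW g l) := by
  induction l with
  | nil => exact Function.bijective_id
  | cons x l ih => exact (hg x).comp ih

/-- Abbreviation for the class of a list in the presented monoid. -/
def mkl (l : List X) : PresentedMonoid (structRel g f) :=
  PresentedMonoid.mk (structRel g f) (FreeMonoid.ofList l)

theorem mkl_append (u v : List X) :
    mkl g f (u ++ v) = mkl g f u * mkl g f v := by
  unfold mkl
  rw [FreeMonoid.ofList_append, map_mul]

theorem mkl_cons (x : X) (l : List X) :
    mkl g f (x :: l) = PresentedMonoid.of (structRel g f) x * mkl g f l := by
  unfold mkl
  rw [FreeMonoid.ofList_cons, map_mul]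
  rfl

theorem mkl_toList (w : FreeMonoid X) :
    mkl g f (FreeMonoid.toList w) = PresentedMonoid.mk (structRel g f) w := rfl

/-- Soundness of the defining relation. -/
theorem rel_sound (x y : X) :
    mkl g f [x, y] = mkl g f [g x y, f y x] :=
  Quotient.sound (ConGen.Rel.of _ _ ⟨x, y, rfl, rfl⟩)

theorem cons_sound (x y : X) (l : List X) :
    mkl g f (x :: y :: l) = mkl g f (g x y :: f y x :: l) := by
  have h1 : (x :: y :: l) = [x, y] ++ l := rfl
  have h2 : (g x y :: f y x :: l) = [g x y, f y x] ++ l := rfl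
  rw [h1, h2, mkl_append, mkl_append, rel_sound]

section Invariance

variable {S : X × X → X × X}
variable (hS : ∀ x y : X, S (x, y) = (g x y, f y x))
variable (hinv : ∀ p : X × X, S (S p) = p)
variable (hbr : Braided S)

include hS hinv in
theorem g_g (x y : X) : g (g x y) (f y x) = x := by
  have h := hinv (x, y)
  rw [hS x y, hS] at h
  exact congrArg Prod.fst h

include hS hbr in
theorem g_braid (x y z : X) : g (g x y) (g (f y x) z) = g x (g y z) := by
  have h := congrFun hbr (x, y, z)
  simp only [Function.comp_apply, S12, S23, hS] at h
  simpa using congrArg Prod.fst h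

include hS hinv hbr in
theorem rel_compat :
    ∀ a b : FreeMonoid X, structRel g f a b →
      FreeMonoid.lift (fun x => (⟨{x}, g x⟩ : K X)) a =
        FreeMonoid.lift (fun x => (⟨{x}, g x⟩ : K X)) b := by
  rintro _ _ ⟨x, y, rfl, rfl⟩
  ext
  · simp only [map_mul, FreeMonoid.lift_eval_of, K.mul_d, Multiset.map_singleton]
    rw [g_g g f hS hinv]
    exact add_comm _ _
  · simp only [map_mul, FreeMonoid.lift_eval_of, K.mul_p, Function.comp_apply]
    exact (g_braid g f hS hbr x y _).symm

/-- The invariant homomorphism. -/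
noncomputable def Φ : PresentedMonoid (structRel g f) →* K X :=
  PresentedMonoid.lift (fun x => (⟨{x}, g x⟩ : K X)) (rel_compat g f hS hinv hbr)

include hS hinv hbr in
theorem Φ_mkl (l : List X) :
    Φ g f hS hinv hbr (mkl g f l) = ⟨DW g l, PW g l⟩ := by
  induction l with
  | nil =>
    have h : mkl g f ([] : List X) = 1 := map_one _
    rw [h, map_one]
    rfl
  | cons x l ih =>
    rw [mkl_cons, map_mul, ih]
    have hx : Φ g f hS hinv hbr (PresentedMonoid.of (structRel g f) x) =
        (⟨{x}, g x⟩ : K X) := PresentedMonoid.lift_of _ _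
    rw [hx]
    ext
    · simp [Multiset.singleton_add]
    · simp

include hS hinv hbr in
theorem DW_invariant {u v : List X} (h : mkl g f u = mkl g f v) :
    DW g u = DW g v := by
  have h2 := congrArg (Φ g f hS hinv hbr) h
  rw [Φ_mkl g f hS hinv hbr, Φ_mkl g f hS hinv hbr] at h2
  exact congrArg K.d h2

end Invariance

/-- Head extraction: any element of the content multiset can be brought to the front. -/
theorem head_extract (l : List X) (c : X) (hc : c ∈ DW g l) :
    ∃ v : List X, mkl g f (c :: v) = mkl g f l := by
  induction l generalizing c with
  | nil => simp at hc
  | cons x l ih =>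
    rw [DW_cons, Multiset.mem_cons] at hc
    rcases hc with rfl | hc
    · exact ⟨l, rfl⟩
    · obtain ⟨d, hd, rfl⟩ := Multiset.mem_map.1 hc
      obtain ⟨v, hv⟩ := ih d hd
      refine ⟨f d x :: v, ?_⟩
      rw [← cons_sound, mkl_cons, hv, ← mkl_cons]

/-- A duplicated content element yields a representative with a frozen pair. -/
theorem frozen_extract (hg : ∀ x : X, Function.Bijective (g x)) (l : List X)
    (hl : ¬ (DW g l).Nodup) :
    ∃ (u v : List X) (x y : X),
      mkl g f (u ++ x :: y :: v) = mkl g f l ∧ g x y = x := by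
  induction l with
  | nil => simp at hl
  | cons z l ih =>
    rw [DW_cons, Multiset.nodup_cons] at hl
    push_neg at hl
    by_cases hmem : z ∈ (DW g l).map (g z)
    · obtain ⟨d, hd, hzd⟩ := Multiset.mem_map.1 hmem
      obtain ⟨v, hv⟩ := head_extract g f l d hd
      refine ⟨[], v, z, d, ?_, hzd⟩
      rw [List.nil_append, mkl_cons, hv, ← mkl_cons]
    · have hnd : ¬ (DW g l).Nodup := by
        intro hnodup
        exact (hl hmem) (hnodup.map (hg z).1)
      obtain ⟨u, v, x, y, huv, hxy⟩ := ih hnd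
      refine ⟨z :: u, v, x, y, ?_, hxy⟩
      rw [List.cons_append, mkl_cons, huv, ← mkl_cons]

/-- A frozen pair in a word forces a duplicate in the content multiset. -/
theorem frozen_dup (u v : List X) (x y : X) (hxy : g x y = x) :
    ¬ (DW g (u ++ x :: y :: v)).Nodup := by
  intro h
  have h2 : (DW g (x :: y :: v)).Nodup := by
    have hle : ((DW g (x :: y :: v)).map (PW g u)) ≤ DW g (u ++ x :: y :: v) := by
      rw [DW_append]; exact le_add_self
    exact (Multiset.nodup_of_le hle h).of_map _
  rw [DW_cons, DW_cons, Multiset.map_cons, hxy, Multiset.nodup_cons] at h2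
  exact h2.1 (Multiset.mem_cons_self x _)

/-- Greedy extension to a word with full content. -/
theorem extend_full [Fintype X] (hg : ∀ x : X, Function.Bijective (g x)) :
    ∀ (k : ℕ) (l : List X), (DW g l).Nodup →
      Multiset.card (DW g l) + k = Fintype.card X →
      ∃ e : List X, DW g (l ++ e) = Finset.univ.val := by
  classical
  intro k
  induction k with
  | zero =>
    intro l hnd hcard
    refine ⟨[], ?_⟩
    rw [List.append_nil]
    have h1 : (DW g l).toFinset = Finset.univ := by
      apply Finset.eq_univ_of_card
      rw [Multiset.toFinset_card_of_nodup hnd]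
      omega
    calc DW g l = (DW g l).toFinset.val :=
          ((Multiset.toFinset_val _).trans (Multiset.dedup_eq_self.2 hnd)).symm
      _ = Finset.univ.val := by rw [h1]
  | succ k ih =>
    intro l hnd hcard
    have hlt : (DW g l).toFinset ≠ Finset.univ := by
      intro h
      have h2 := congrArg Finset.card h
      rw [Multiset.toFinset_card_of_nodup hnd, Finset.card_univ] at h2
      omega
    obtain ⟨c, hc⟩ : ∃ c, c ∉ (DW g l).toFinset := by
      by_contra h
      push_neg at h
      exact hlt (Finset.eq_univ_iff_forall.2 h)
    rw [Multiset.mem_toFinset] at hc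
    obtain ⟨t, ht⟩ := (PW_bijective g hg l).2 c
    have hDW : DW g (l ++ [t]) = DW g l + {c} := by
      rw [DW_append]
      simp [ht]
    have hnd' : (DW g (l ++ [t])).Nodup := by
      rw [hDW, add_comm, Multiset.singleton_add, Multiset.nodup_cons]
      exact ⟨hc, hnd⟩
    have hcard' : Multiset.card (DW g (l ++ [t])) + k = Fintype.card X := by
      rw [hDW]; simp; omega
    obtain ⟨e, he⟩ := ih (l ++ [t]) hnd' hcard'
    rw [List.append_assoc] at he
    exact ⟨t :: e, he⟩

end Stmt8Aux

open Stmt8Aux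

/-- an element `a` of `M(X,S)` divides the Garside element `Δ` if and only if no
word representative of `a` contains a frozen word `xy` (i.e. `S(x,y) = (x,y)`) as a subword of
two consecutive letters. -/
theorem stmt_8 {X : Type*} [Fintype X]
    (S : X × X → X × X) (g f : X → X → X)
    (hS : ∀ x y : X, S (x, y) = (g x y, f y x))
    (hg : ∀ x : X, Function.Bijective (g x))
    (hf : ∀ x : X, Function.Bijective (f x))
    (hinv : ∀ p : X × X, S (S p) = p)
    (hbr : Braided S)
    (Δ : PresentedMonoid (structRel g f))
    (hΔdvd : ∀ x : X, PresentedMonoid.of (structRel g f) x ∣ Δ)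
    (hΔlcm : ∀ m : PresentedMonoid (structRel g f),
      (∀ x : X, PresentedMonoid.of (structRel g f) x ∣ m) → Δ ∣ m)
    (a : PresentedMonoid (structRel g f)) :
    a ∣ Δ ↔
      ∀ w : FreeMonoid X, PresentedMonoid.mk (structRel g f) w = a →
        ¬∃ (u v : List X) (x y : X),
          FreeMonoid.toList w = u ++ x :: y :: v ∧ S (x, y) = (x, y) := by
  classical
  have key : ∀ u v : List X, mkl g f u = mkl g f v → DW g u = DW g v :=
    fun u v h => DW_invariant g f hS hinv hbr h
  -- full-content words are common multiples of all the generators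
  have full_dvd : ∀ l : List X, DW g l = Finset.univ.val →
      ∀ x : X, PresentedMonoid.of (structRel g f) x ∣ mkl g f l := by
    intro l hl x
    have hx : x ∈ DW g l := by rw [hl]; exact Finset.mem_univ_val x
    obtain ⟨v, hv⟩ := head_extract g f l x hx
    exact ⟨mkl g f v, by rw [← hv, mkl_cons]⟩
  -- a length-(card X) common multiple of all generators
  obtain ⟨e0, he0⟩ := extend_full g hg (Fintype.card X) [] (by simp) (by simp)
  rw [List.nil_append] at he0
  have hΔe0 : Δ ∣ mkl g f e0 := hΔlcm _ (full_dvd e0 he0)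
  -- a representative of Δ
  obtain ⟨wδ, hwδ⟩ := PresentedMonoid.surjective_mk Δ
  have hmklδ : mkl g f (FreeMonoid.toList wδ) = Δ := by rw [mkl_toList]; exact hwδ
  -- card of DW (toList wδ) is at most card X
  obtain ⟨d0, hd0⟩ := hΔe0
  obtain ⟨wd0, hwd0⟩ := PresentedMonoid.surjective_mk d0
  have hsplit0 : mkl g f e0 = mkl g f (FreeMonoid.toList wδ ++ FreeMonoid.toList wd0) := by
    rw [mkl_append, hmklδ, mkl_toList, hwd0, hd0]
  have he0len : e0.length = Fintype.card X := by
    have h := congrArg Multiset.card he0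
    rw [card_DW] at h
    simpa using h
  have hcardδ : Multiset.card (DW g (FreeMonoid.toList wδ)) ≤ Fintype.card X := by
    have h1 := congrArg Multiset.card (key _ _ hsplit0)
    rw [card_DW, card_DW, List.length_append] at h1
    rw [card_DW]
    omega
  -- every generator appears in DW (toList wδ)
  have hmemδ : ∀ x : X, x ∈ DW g (FreeMonoid.toList wδ) := by
    intro x
    obtain ⟨c, hc⟩ := hΔdvd x
    obtain ⟨wc, hwc⟩ := PresentedMonoid.surjective_mk c
    have h : mkl g f (FreeMonoid.toList wδ) = mkl g f (x :: FreeMonoid.toList wc) := by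
      rw [hmklδ, mkl_cons, mkl_toList, hwc, hc]
    rw [key _ _ h, DW_cons]
    exact Multiset.mem_cons_self x _
  -- DW (toList wδ) is the full multiset
  have hδfull : DW g (FreeMonoid.toList wδ) = Finset.univ.val := by
    symm
    apply Multiset.eq_of_le_of_card_le
    · rw [Multiset.le_iff_count]
      intro x
      rw [Multiset.count_univ]
      exact Multiset.one_le_count_iff_mem.2 (hmemδ x)
    · simpa using hcardδ
  have hδnodup : (DW g (FreeMonoid.toList wδ)).Nodup := by
    rw [hδfull]; exact Finset.univ.nodup
  have hδcard : Multiset.card (DW g (FreeMonoid.toList wδ)) = Fintype.card X := by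
    rw [hδfull]; simp
  constructor
  · -- forward direction
    rintro ⟨c, hc⟩ w hw ⟨u, v, x, y, hsplit, hfz⟩
    have hgxy : g x y = x := by
      have h : (g x y, f y x) = (x, y) := by rw [← hS x y]; exact hfz
      exact congrArg Prod.fst h
    obtain ⟨wc, hwc⟩ := PresentedMonoid.surjective_mk c
    have hΔw : mkl g f (FreeMonoid.toList wδ) =
        mkl g f (FreeMonoid.toList w ++ FreeMonoid.toList wc) := by
      rw [hmklδ, mkl_append, mkl_toList, mkl_toList, hw, hwc, hc]
    have hnd : (DW g (FreeMonoid.toList w ++ FreeMonoid.toList wc)).Nodup := by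
      rw [← key _ _ hΔw]; exact hδnodup
    rw [hsplit, List.append_assoc, List.cons_append, List.cons_append] at hnd
    exact frozen_dup g u _ x y hgxy hnd
  · -- backward direction
    intro h
    obtain ⟨wa, hwa⟩ := PresentedMonoid.surjective_mk a
    have hmkla : mkl g f (FreeMonoid.toList wa) = a := by rw [mkl_toList]; exact hwa
    -- DW (toList wa) is nodup
    have hnd : (DW g (FreeMonoid.toList wa)).Nodup := by
      by_contra hnd
      obtain ⟨u, v, x, y, huv, hxy⟩ := frozen_extract g f hg (FreeMonoid.toList wa) hnd
      have hfyx : f y x = y := by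
        have h1 := g_g g f hS hinv x y
        rw [hxy] at h1
        exact (hg x).1 (h1.trans hxy.symm)
      refine h (FreeMonoid.ofList (u ++ x :: y :: v)) ?_ ⟨u, v, x, y, rfl, ?_⟩
      · show mkl g f (u ++ x :: y :: v) = a
        rw [huv, hmkla]
      · rw [hS x y, hxy, hfyx]
    -- extend to a full-content word
    have hcard : Multiset.card (DW g (FreeMonoid.toList wa)) ≤ Fintype.card X := by
      have h1 := Multiset.toFinset_card_of_nodup hnd
      have h2 : (DW g (FreeMonoid.toList wa)).toFinset.card ≤ Fintype.card X :=
        Finset.card_le_univ _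
      omega
    obtain ⟨e, he⟩ := extend_full g hg
      (Fintype.card X - Multiset.card (DW g (FreeMonoid.toList wa)))
      (FreeMonoid.toList wa) hnd (by omega)
    have hΔle : Δ ∣ mkl g f (FreeMonoid.toList wa ++ e) := hΔlcm _ (full_dvd _ he)
    obtain ⟨d, hd⟩ := hΔle
    obtain ⟨wd, hwd⟩ := PresentedMonoid.surjective_mk d
    have hsplit2 : mkl g f (FreeMonoid.toList wδ ++ FreeMonoid.toList wd) =
        mkl g f (FreeMonoid.toList wa ++ e) := by
      rw [mkl_append, hmklδ, mkl_toList, hwd]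
      exact hd.symm
    have hfulllen : (FreeMonoid.toList wa ++ e).length = Fintype.card X := by
      have h1 := congrArg Multiset.card he
      rw [card_DW] at h1
      simpa using h1
    have hlen : FreeMonoid.toList wd = [] := by
      have h1 := congrArg Multiset.card (key _ _ hsplit2)
      rw [card_DW, card_DW, List.length_append, List.length_append] at h1
      have h3 : (FreeMonoid.toList wδ).length = Fintype.card X := by
        rw [← card_DW g (FreeMonoid.toList wδ)]
        exact hδcard
      rw [List.length_append] at hfulllen
      have h4 : (FreeMonoid.toList wd).length = 0 := by omega
      exact List.length_eq_zero_iff.1 h4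
    have hd1 : d = 1 := by
      rw [← hwd, ← mkl_toList g f wd, hlen]
      exact map_one _
    have hΔeq : Δ = mkl g f (FreeMonoid.toList wa ++ e) := by rw [hd, hd1, mul_one]
    exact ⟨mkl g f e, by rw [hΔeq, mkl_append, hmkla]⟩
end

section
/- Let (X,S) be a non-degenerate symmetric solution with structure monoid M(X,S) and signed permutation representation ψ. For every a ∈ M(X,S) and x ∈ X, if ψ_a(x) = −φ_a(x) then x right-divides a in M(X,S). -/
/-- `n(ρ) = #{x ∈ X : ρ(x) ∉ X}` : the number of basis vectors whose image under `ρ` is not a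
(positive) basis vector. -/
noncomputable def nneg {X : Type*} [DecidableEq X] (ρ : Matrix X X ℝ) : ℕ :=
  Set.ncard {x : X | ∀ z : X, (fun w => ρ w x) ≠ Pi.single z (1 : ℝ)}


/-- for `a ∈ M(X,S)` and `x ∈ X`, if `ψ_a(x) = -φ_a(x)` then `x` right-divides
`a` in `M(X,S)`.  Here `Φ` and `Ψ` are the permutation and signed permutation representations,
determined by their values `φ_x = f_x⁻¹` and `ψ_x` on the generators. -/
theorem stmt_11 {X : Type*} [Fintype X] [DecidableEq X] [Nonempty X]
    (S : X × X → X × X) (g f : X → X → X)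
    (hS : ∀ x y : X, S (x, y) = (g x y, f y x))
    (hg : ∀ x : X, Function.Bijective (g x))
    (hf : ∀ x : X, Function.Bijective (f x))
    (hinv : ∀ p : X × X, S (S p) = p)
    (hbr : Braided S)
    (Φ : PresentedMonoid (structRel g f) →* Equiv.Perm X)
    (hΦ : ∀ x : X, Φ (PresentedMonoid.of (structRel g f) x)
      = (Equiv.ofBijective (f x) (hf x)).symm)
    (Ψ : PresentedMonoid (structRel g f) →* Matrix X X ℝ)
    (hΨ : ∀ x : X, Ψ (PresentedMonoid.of (structRel g f) x) = psiMat f x) :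
    ∀ (a : PresentedMonoid (structRel g f)) (x : X),
      (fun w => Ψ a w x) = -(Pi.single (Φ a x) (1 : ℝ)) →
        ∃ b : PresentedMonoid (structRel g f),
          a = b * PresentedMonoid.of (structRel g f) x := by
  have hφ : ∀ y x : X, Function.invFun (f y) x = (Equiv.ofBijective (f y) (hf y)).symm x := by
    intro y x
    apply (hf y).1
    rw [Function.invFun_eq ((hf y).2 x)]
    exact ((Equiv.ofBijective (f y) (hf y)).apply_symm_apply x).symm
  have key : ∀ l : List X, ∀ x : X,
      (fun w => Ψ (PresentedMonoid.mk (structRel g f) (FreeMonoid.ofList l)) w x)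
        = -(Pi.single (Φ (PresentedMonoid.mk (structRel g f) (FreeMonoid.ofList l)) x)
            (1 : ℝ)) →
      ∃ b : PresentedMonoid (structRel g f),
        PresentedMonoid.mk (structRel g f) (FreeMonoid.ofList l)
          = b * PresentedMonoid.of (structRel g f) x := by
    intro l
    induction l using List.reverseRecOn with
    | nil =>
      intro x hx
      exfalso
      have h1 : PresentedMonoid.mk (structRel g f) (FreeMonoid.ofList ([] : List X)) = 1 := rfl
      rw [h1, map_one, map_one] at hx
      have := congrFun hx x
      simp [Matrix.one_apply, Pi.single_apply] at this
      linarith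
    | append_singleton l y ih =>
      intro x hx
      set a' := PresentedMonoid.mk (structRel g f) (FreeMonoid.ofList l) with ha'
      have hsplit : PresentedMonoid.mk (structRel g f) (FreeMonoid.ofList (l ++ [y]))
          = a' * PresentedMonoid.of (structRel g f) y := by
        rw [FreeMonoid.ofList_append, map_mul]
        rfl
      rw [hsplit] at hx ⊢
      have hΨmul : ∀ w : X, Ψ (a' * PresentedMonoid.of (structRel g f) y) w x
          = (if x = y then (-1 : ℝ) else 1) * Ψ a' w (Function.invFun (f y) x) := by
        intro w
        rw [map_mul, hΨ, Matrix.mul_apply]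
        rcases eq_or_ne x y with h | h <;>
          simp [psiMat, h, mul_ite, Finset.sum_ite_eq', mul_comm]
      have hΦmul : Φ (a' * PresentedMonoid.of (structRel g f) y) x
          = Φ a' (Function.invFun (f y) x) := by
        rw [map_mul, hΦ, hφ y x]
        rfl
      by_cases hxy : x = y
      · subst hxy
        exact ⟨a', rfl⟩
      · set x' := Function.invFun (f y) x with hx'
        have hcol : (fun w => Ψ a' w x') = -(Pi.single (Φ a' x') (1 : ℝ)) := by
          funext w
          have h := congrFun hx w
          rw [hΨmul w, if_neg hxy, one_mul, hΦmul] at h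
          exact h
        obtain ⟨b', hb'⟩ := ih x' hcol
        refine ⟨b' * PresentedMonoid.of (structRel g f) (g x' y), ?_⟩
        rw [hb', mul_assoc, mul_assoc]
        congr 1
        have hrel : PresentedMonoid.of (structRel g f) x' * PresentedMonoid.of (structRel g f) y
            = PresentedMonoid.of (structRel g f) (g x' y)
              * PresentedMonoid.of (structRel g f) (f y x') :=
          Quotient.sound (ConGen.Rel.of _ _ ⟨x', y, rfl, rfl⟩)
        have hfx : f y x' = x := Function.invFun_eq ((hf y).2 x)
        rw [hrel, hfx]
  intro a x
  induction a using PresentedMonoid.inductionOn with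
  | h l => exact key l.toList x
end

section
/- Let (X,S) be a non-degenerate symmetric solution satisfying Property (C) (for every frozen pair (x,y), g_x ∘ g_y = id and f_y ∘ f_x = id). If (x,y) is a frozen pair, then (y,x) is also a frozen pair. -/
/-- Property (C): for every frozen pair `(x,y)` (i.e. `S(x,y) = (x,y)`), one has
`g_x ∘ g_y = id` and `f_y ∘ f_x = id`. -/
def PropertyC {X : Type*} (S : X × X → X × X) (g f : X → X → X) : Prop :=
  ∀ x y : X, S (x, y) = (x, y) →
    (∀ z : X, g x (g y z) = z) ∧ (∀ z : X, f y (f x z) = z)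

/-- if `(X,S)` satisfies Property (C) and `(x,y)` is a frozen pair, then `(y,x)`
is also a frozen pair. -/
theorem stmt_13 {X : Type*} [Fintype X]
    (S : X × X → X × X) (g f : X → X → X)
    (hS : ∀ x y : X, S (x, y) = (g x y, f y x))
    (hg : ∀ x : X, Function.Bijective (g x))
    (hf : ∀ x : X, Function.Bijective (f x))
    (hinv : ∀ p : X × X, S (S p) = p)
    (hbr : Braided S)
    (hC : PropertyC S g f) :
    ∀ x y : X, S (x, y) = (x, y) → S (y, x) = (y, x) := by
  intro x y hfr
  have h := hfr
  rw [hS] at h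
  have hgxy : g x y = x := (Prod.mk.injEq _ _ _ _ ▸ h).1
  have hfyx : f y x = y := (Prod.mk.injEq _ _ _ _ ▸ h).2
  obtain ⟨hC1, hC2⟩ := hC x y hfr
  have h1 : g y x = y := (hg x).1 (by rw [hC1 x, hgxy])
  have h2 : f x y = x := (hf y).1 (by rw [hC2 y, hfyx])
  rw [hS, h1, h2]
end

section
/- Let (X,S) be a non-degenerate symmetric solution satisfying Property (C), and let xy be a frozen word. Then for every z ∈ X there exists a unique frozen pair (x′,y′) with xyz = z x′ y′ in the structure monoid M(X,S). -/
/-!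
Rewriting `xyz` by `S` on the last two letters and then on the first two gives `z x′ y′`;
Property (C) (`g_x ∘ g_y = id`) is what puts `z` in front, and the braid relation applied to the
`S¹²`-fixed triple `(x, y, z)` shows that `(x′, y′)` is frozen.

For uniqueness, two words of length three are equal in `M(X,S)` only if their triples lie in one
orbit of the group generated by the involutions `S¹²` and `S²³`. When `S²³` fixes `w = (z, x′, y′)`
this orbit is `{w, S¹²w, S²³S¹²w}`, so another frozen tail `(c, d)` after `z` forces
`S¹²w = (z, c, d)`; Property (C) for the frozen pairs `(x′, y′)` and `(c, y′)` then gives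
`f_{y′}(c) = z = f_{y′}(x′)`, and injectivity of `f_{y′}` yields `c = x′`.
-/

open Relation Function

section Rewriting

variable {M : Type*} [Monoid M] {r : M → M → Prop} {u v : M}

def RewriteStep (r : M → M → Prop) (u v : M) : Prop :=
  ∃ l m a b, r a b ∧ u = l * a * m ∧ v = l * b * m

lemma RewriteStep.mul_left (w : M) (h : RewriteStep r u v) : RewriteStep r (w * u) (w * v) := by
  obtain ⟨l, m, a, b, hab, rfl, rfl⟩ := h
  exact ⟨w * l, m, a, b, hab, by simp only [mul_assoc], by simp only [mul_assoc]⟩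

lemma RewriteStep.mul_right (w : M) (h : RewriteStep r u v) : RewriteStep r (u * w) (v * w) := by
  obtain ⟨l, m, a, b, hab, rfl, rfl⟩ := h
  exact ⟨l, m * w, a, b, hab, by simp only [mul_assoc], by simp only [mul_assoc]⟩

lemma RewriteStep.symm (hr : Std.Symm r) (h : RewriteStep r u v) : RewriteStep r v u := by
  obtain ⟨l, m, a, b, hab, rfl, rfl⟩ := h
  exact ⟨l, m, b, a, hr.symm _ _ hab, rfl, rfl⟩

def rewriteCon (r : M → M → Prop) : Con M where
  toSetoid := EqvGen.setoid (RewriteStep r)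
  mul' {a b c d} hab hcd :=
    have hac : EqvGen (RewriteStep r) (a * c) (b * c) :=
      Setoid.eqvGen_le (s := (EqvGen.setoid (RewriteStep r)).comap (· * c))
        (fun _ _ h => EqvGen.rel _ _ (h.mul_right c)) hab
    have hbd : EqvGen (RewriteStep r) (b * c) (b * d) :=
      Setoid.eqvGen_le (s := (EqvGen.setoid (RewriteStep r)).comap (b * ·))
        (fun _ _ h => EqvGen.rel _ _ (h.mul_left b)) hcd
    hac.trans _ _ _ hbd

lemma conGen_le_rewriteCon (r : M → M → Prop) : conGen r ≤ rewriteCon r :=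
  Con.conGen_le.2 fun a b h => EqvGen.rel _ _ ⟨1, 1, a, b, h, by simp, by simp⟩

end Rewriting

lemma Relation.EqvGen.mem_iff_mem {α : Type*} {r : α → α → Prop} {W : Set α} {u v : α}
    (huv : EqvGen r u v) (h : ∀ u v, r u v → (u ∈ W ↔ v ∈ W)) : u ∈ W ↔ v ∈ W :=
  Iff.of_eq (Setoid.eqvGen_le (s := Setoid.ker (· ∈ W)) (fun u v h' => propext (h u v h')) huv)

lemma mapsTo_braidOrbit {α : Type*} {σ τ : α → α} (hσ : Involutive σ) (hτ : Involutive τ)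
    (hbr : ∀ p, σ (τ (σ p)) = τ (σ (τ p))) {w : α} (hw : τ w = w) :
    Set.MapsTo σ {w, σ w, τ (σ w)} {w, σ w, τ (σ w)} ∧
      Set.MapsTo τ {w, σ w, τ (σ w)} {w, σ w, τ (σ w)} := by
  refine forall_and.1 fun q => imp_and.1 fun hq => ?_
  rcases hq with rfl | rfl | rfl
  · simp [hw]
  · simp [hσ w]
  · have : σ (τ (σ w)) = τ (σ w) := by rw [hbr, hw]
    simp [this, hτ (σ w)]

section StructureMonoid

variable {X : Type*} {S : X × X → X × X} {g f : X → X → X}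

def tripleWord (t : X × X × X) : FreeMonoid X := FreeMonoid.ofList [t.1, t.2.1, t.2.2]

lemma tripleWord_apply (a b c : X) :
    tripleWord (a, b, c) = FreeMonoid.of a * FreeMonoid.of b * FreeMonoid.of c :=
  rfl

lemma tripleWord_injective : Injective (tripleWord (X := X)) := by
  rintro ⟨a, b, c⟩ ⟨a', b', c'⟩ h
  simpa [tripleWord] using congrArg FreeMonoid.toList h

lemma S12_apply (hS : ∀ x y : X, S (x, y) = (g x y, f y x)) (a b c : X) :
    S12 S (a, b, c) = (g a b, f b a, c) := by
  simp [S12, hS]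

lemma S23_apply (hS : ∀ x y : X, S (x, y) = (g x y, f y x)) (a b c : X) :
    S23 S (a, b, c) = (a, g b c, f c b) := by
  simp [S23, hS]

lemma S12_involutive (hinv : ∀ p : X × X, S (S p) = p) : Involutive (S12 S) := by
  rintro ⟨a, b, c⟩
  simp [S12, hinv]

lemma S23_involutive (hinv : ∀ p : X × X, S (S p) = p) : Involutive (S23 S) := by
  rintro ⟨a, b, c⟩
  simp [S23, hinv]

lemma structRel_symm (hS : ∀ x y : X, S (x, y) = (g x y, f y x))
    (hinv : ∀ p : X × X, S (S p) = p) : Std.Symm (structRel g f) := by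
  refine ⟨?_⟩
  rintro _ _ ⟨x, y, rfl, rfl⟩
  have hxy : S (g x y, f y x) = (x, y) := by rw [← hS]; exact hinv _
  rw [hS, Prod.mk.injEq] at hxy
  exact ⟨g x y, f y x, rfl, by rw [hxy.1, hxy.2]⟩

lemma rewriteStep_tripleWord (hS : ∀ x y : X, S (x, y) = (g x y, f y x)) {t : X × X × X}
    {v : FreeMonoid X} (h : RewriteStep (structRel g f) (tripleWord t) v) :
    v = tripleWord (S12 S t) ∨ v = tripleWord (S23 S t) := by
  obtain ⟨l, m, _, _, ⟨x, y, rfl, rfl⟩, hu, rfl⟩ := h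
  obtain ⟨a, b, c⟩ := t
  obtain ⟨L, rfl⟩ := FreeMonoid.ofList.surjective l
  obtain ⟨R, rfl⟩ := FreeMonoid.ofList.surjective m
  have hlist : [a, b, c] = L ++ [x, y] ++ R := congrArg FreeMonoid.toList hu
  rw [S12_apply hS, S23_apply hS]
  rcases L with _ | ⟨_, _ | ⟨_, _⟩⟩
  · obtain ⟨rfl, rfl, rfl⟩ : a = x ∧ b = y ∧ [c] = R := by simpa using hlist
    exact Or.inl rfl
  · obtain ⟨rfl, rfl, rfl, rfl⟩ : _ = a ∧ b = x ∧ c = y ∧ R = [] := by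
      simpa [eq_comm] using hlist
    exact Or.inr rfl
  · exact absurd (congrArg List.length hlist) (by simp; omega)

lemma mk_tripleWord_S12 (hS : ∀ x y : X, S (x, y) = (g x y, f y x)) (t : X × X × X) :
    PresentedMonoid.mk (structRel g f) (tripleWord (S12 S t))
      = PresentedMonoid.mk (structRel g f) (tripleWord t) := by
  obtain ⟨a, b, c⟩ := t
  have hab : PresentedMonoid.mk (structRel g f) (FreeMonoid.of (g a b) * FreeMonoid.of (f b a))
      = PresentedMonoid.mk (structRel g f) (FreeMonoid.of a * FreeMonoid.of b) :=
    (PresentedMonoid.mk_eq_mk_of_rel ⟨a, b, rfl, rfl⟩).symm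
  rw [S12_apply hS, tripleWord_apply, tripleWord_apply]
  simp only [map_mul] at hab ⊢
  rw [hab]

lemma mk_tripleWord_S23 (hS : ∀ x y : X, S (x, y) = (g x y, f y x)) (t : X × X × X) :
    PresentedMonoid.mk (structRel g f) (tripleWord (S23 S t))
      = PresentedMonoid.mk (structRel g f) (tripleWord t) := by
  obtain ⟨a, b, c⟩ := t
  have hbc : PresentedMonoid.mk (structRel g f) (FreeMonoid.of (g b c) * FreeMonoid.of (f c b))
      = PresentedMonoid.mk (structRel g f) (FreeMonoid.of b * FreeMonoid.of c) :=
    (PresentedMonoid.mk_eq_mk_of_rel ⟨b, c, rfl, rfl⟩).symm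
  rw [S23_apply hS, tripleWord_apply, tripleWord_apply]
  simp only [map_mul, mul_assoc] at hbc ⊢
  rw [hbc]

lemma eq_of_frozen_of_apply_eq (hS : ∀ x y : X, S (x, y) = (g x y, f y x))
    (hf : ∀ x : X, Injective (f x)) (hinv : ∀ p : X × X, S (S p) = p) (hC : PropertyC S g f)
    {z a b c : X} (hab : S (a, b) = (a, b)) (hcb : S (c, b) = (c, b)) (hza : S (z, a) = (z, c)) :
    c = a := by
  have hzc : S (z, c) = (z, a) := by rw [← hza, hinv]
  rw [hS, Prod.mk.injEq] at hza hzc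
  have h1 : f b c = z := by rw [← hza.2]; exact (hC a b hab).2 z
  have h2 : f b a = z := by rw [← hzc.2]; exact (hC c b hcb).2 z
  exact hf b (h1.trans h2.symm)

lemma eq_of_mk_tripleWord_eq_of_frozen (hS : ∀ x y : X, S (x, y) = (g x y, f y x))
    (hf : ∀ x : X, Injective (f x)) (hinv : ∀ p : X × X, S (S p) = p) (hbr : Braided S)
    (hC : PropertyC S g f) {z a b c d : X} (hab : S (a, b) = (a, b)) (hcd : S (c, d) = (c, d))
    (h : PresentedMonoid.mk (structRel g f) (tripleWord (z, a, b))
      = PresentedMonoid.mk (structRel g f) (tripleWord (z, c, d))) :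
    (c, d) = (a, b) := by
  set A : Set (X × X × X) := {(z, a, b), S12 S (z, a, b), S23 S (S12 S (z, a, b))}
  have hfix : ∀ {p q : X}, S (p, q) = (p, q) → S23 S (z, p, q) = (z, p, q) := fun h => by
    simp [S23, h]
  have hA : Set.MapsTo (S12 S) A A ∧ Set.MapsTo (S23 S) A A :=
    mapsTo_braidOrbit (S12_involutive hinv) (S23_involutive hinv) (congrFun hbr) (hfix hab)
  have hstep : ∀ u v, RewriteStep (structRel g f) u v →
      u ∈ tripleWord '' A → v ∈ tripleWord '' A := by
    rintro u v huv ⟨q, hq, rfl⟩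
    rcases rewriteStep_tripleWord hS huv with rfl | rfl
    exacts [⟨_, hA.1 hq, rfl⟩, ⟨_, hA.2 hq, rfl⟩]
  have hreach :
      EqvGen (RewriteStep (structRel g f)) (tripleWord (z, a, b)) (tripleWord (z, c, d)) :=
    conGen_le_rewriteCon _ (PresentedMonoid.mk_eq_mk_iff.1 h)
  obtain ⟨q, hq, hqcd⟩ : tripleWord (z, c, d) ∈ tripleWord '' A :=
    (hreach.mem_iff_mem fun u v huv =>
      ⟨hstep u v huv, hstep v u (huv.symm (structRel_symm hS hinv))⟩).1 ⟨_, Or.inl rfl, rfl⟩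
  obtain rfl := tripleWord_injective hqcd
  obtain hzab | hσ : (z, c, d) = (z, a, b) ∨ S12 S (z, a, b) = (z, c, d) := by
    rcases hq with h | h | h
    · exact Or.inl h
    · exact Or.inr h.symm
    · rw [← hfix hcd, h, S23_involutive hinv]
      exact Or.inr rfl
  · exact (Prod.ext_iff.1 hzab).2
  · rw [S12_apply hS, Prod.mk.injEq, Prod.mk.injEq] at hσ
    obtain ⟨hgza, hfaz, rfl⟩ := hσ
    have hza : S (z, a) = (z, c) := by rw [hS, hgza, hfaz]
    rw [eq_of_frozen_of_apply_eq hS hf hinv hC hab hcd hza]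

end StructureMonoid

theorem stmt_14_general {X : Type*}
    (S : X × X → X × X) (g f : X → X → X)
    (hS : ∀ x y : X, S (x, y) = (g x y, f y x))
    (hf : ∀ x : X, Function.Bijective (f x))
    (hinv : ∀ p : X × X, S (S p) = p)
    (hbr : Braided S)
    (hC : PropertyC S g f)
    (x y : X) (hxy : S (x, y) = (x, y)) :
    ∀ z : X, ∃! p : X × X, S p = p ∧
      PresentedMonoid.mk (structRel g f) (FreeMonoid.ofList [x, y, z])
        = PresentedMonoid.mk (structRel g f) (FreeMonoid.ofList [z, p.1, p.2]) := by
  intro z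
  have horbit : S12 S (S23 S (x, y, z)) = (z, f (g y z) x, f z y) := by
    rw [S23_apply hS, S12_apply hS, (hC x y hxy).1]
  have hfrozen : S (f (g y z) x, f z y) = (f (g y z) x, f z y) := by
    have hfix : S12 S (x, y, z) = (x, y, z) := by simp [S12, hxy]
    have hbraid : S12 S (S23 S (S12 S (x, y, z))) = S23 S (S12 S (S23 S (x, y, z))) :=
      congrFun hbr (x, y, z)
    rw [hfix, horbit] at hbraid
    exact congrArg Prod.snd hbraid.symm
  have hmk : PresentedMonoid.mk (structRel g f) (tripleWord (x, y, z))
      = PresentedMonoid.mk (structRel g f) (tripleWord (z, f (g y z) x, f z y)) := by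
    rw [← horbit, mk_tripleWord_S12 hS, mk_tripleWord_S23 hS]
  refine ⟨_, ⟨hfrozen, hmk⟩, ?_⟩
  rintro ⟨c, d⟩ ⟨hcd, h⟩
  exact eq_of_mk_tripleWord_eq_of_frozen hS (fun x => (hf x).1) hinv hbr hC hfrozen hcd
    (hmk.symm.trans h)

/-- under Property (C), if `xy` is a frozen word then for every `z ∈ X` there is
a unique frozen pair `(x′,y′)` with `xyz = z x′ y′` in the structure monoid `M(X,S)`. -/
theorem stmt_14 {X : Type*} [Fintype X]
    (S : X × X → X × X) (g f : X → X → X)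
    (hS : ∀ x y : X, S (x, y) = (g x y, f y x))
    (hg : ∀ x : X, Function.Bijective (g x))
    (hf : ∀ x : X, Function.Bijective (f x))
    (hinv : ∀ p : X × X, S (S p) = p)
    (hbr : Braided S)
    (hC : PropertyC S g f)
    (x y : X) (hxy : S (x, y) = (x, y)) :
    ∀ z : X, ∃! p : X × X, S p = p ∧
      PresentedMonoid.mk (structRel g f) (FreeMonoid.ofList [x, y, z])
        = PresentedMonoid.mk (structRel g f) (FreeMonoid.ofList [z, p.1, p.2]) :=
  stmt_14_general S g f hS hf hinv hbr hC x y hxy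
end

section
/- Let (X,S) be a non-degenerate symmetric solution satisfying Property (C). Then any two frozen elements commute in M(X,S): if x₁y₁ and x₂y₂ are distinct frozen words, then x₁y₁x₂y₂ = x₂y₂x₁y₁ in M(X,S), and this common element is both the right lcm and the left lcm of the two frozen elements. -/
/-- `a` right-divides `b` (i.e. `b` is a left multiple of `a`). -/
def RDvd {M : Type*} [Monoid M] (a b : M) : Prop := ∃ c : M, b = c * a

/-- `c` is the right lcm of `a` and `b` (for left-divisibility). -/
def IsRightLcm {M : Type*} [Monoid M] (a b c : M) : Prop :=
  a ∣ c ∧ b ∣ c ∧ ∀ d : M, a ∣ d → b ∣ d → c ∣ d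

/-- `c` is the left lcm of `a` and `b` (for right-divisibility). -/
def IsLeftLcm {M : Type*} [Monoid M] (a b c : M) : Prop :=
  RDvd a c ∧ RDvd b c ∧ ∀ d : M, RDvd a d → RDvd b d → RDvd c d

open Function MulOpposite

@[ext] structure TwistedMultiset (X : Type*) where
  letters : Multiset X
  twist : X → X

namespace TwistedMultiset

variable {X : Type*}

instance : One (TwistedMultiset X) := ⟨⟨0, id⟩⟩

instance : Mul (TwistedMultiset X) :=
  ⟨fun a b => ⟨a.letters + b.letters.map a.twist, a.twist ∘ b.twist⟩⟩

@[simp] lemma letters_one : (1 : TwistedMultiset X).letters = 0 := rfl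
@[simp] lemma twist_one : (1 : TwistedMultiset X).twist = id := rfl
@[simp] lemma letters_mul (a b : TwistedMultiset X) :
    (a * b).letters = a.letters + b.letters.map a.twist := rfl
@[simp] lemma twist_mul (a b : TwistedMultiset X) : (a * b).twist = a.twist ∘ b.twist := rfl

instance : Monoid (TwistedMultiset X) where
  mul_assoc a b c := by ext1 <;> simp [Multiset.map_map, add_assoc, comp_assoc]
  one_mul a := by ext1 <;> simp
  mul_one a := by ext1 <;> simp

end TwistedMultiset

section StructureMonoid

variable {X : Type*} (g f : X → X → X)

local notation "M" => PresentedMonoid (structRel g f)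
local notation "ι" => PresentedMonoid.of (structRel g f)

lemma of_mul_of_eq_of_mul_of (x y : X) : ι x * ι y = ι (g x y) * ι (f y x) :=
  PresentedMonoid.mk_eq_mk_of_rel ⟨x, y, rfl, rfl⟩

def lettersHom : FreeMonoid X →* TwistedMultiset X :=
  FreeMonoid.lift fun x => ⟨{x}, g x⟩

@[simp] lemma lettersHom_of (x : X) : lettersHom g (.of x) = ⟨{x}, g x⟩ := rfl

lemma of_dvd_mk_of_mem_letters (w : FreeMonoid X) {x : X}
    (hx : x ∈ (lettersHom g w).letters) : ι x ∣ PresentedMonoid.mk _ w := by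
  induction w using FreeMonoid.inductionOn' generalizing x with
  | one => simp at hx
  | of_mul a v ih =>
    rw [map_mul] at hx ⊢
    simp only [lettersHom_of, TwistedMultiset.letters_mul, Multiset.mem_add,
      Multiset.mem_singleton, Multiset.mem_map] at hx
    obtain rfl | ⟨z, hz, rfl⟩ := hx
    · exact ⟨_, rfl⟩
    · obtain ⟨u, hu⟩ := ih hz
      refine ⟨ι (f z a) * u, ?_⟩
      change ι a * _ = _
      rw [hu, ← mul_assoc, of_mul_of_eq_of_mul_of, mul_assoc]

structure LeftCompatible : Prop where
  braid : ∀ x y z, g (g x y) (g (f y x) z) = g x (g y z)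
  inv : ∀ x y, g (g x y) (f y x) = x
  injective : ∀ x, Injective (g x)

variable {g f}

namespace LeftCompatible

variable (hc : LeftCompatible g f)

def cocycle : M →* TwistedMultiset X :=
  PresentedMonoid.lift (fun x => ⟨{x}, g x⟩) <| by
    rintro _ _ ⟨x, y, rfl, rfl⟩
    ext1
    · simpa [hc.inv] using Multiset.pair_comm x (g x y)
    · funext z
      simp [hc.braid]

lemma cocycle_mk (w : FreeMonoid X) : hc.cocycle (PresentedMonoid.mk _ w) = lettersHom g w := rfl

@[simp] lemma cocycle_of (x : X) : hc.cocycle (ι x) = ⟨{x}, g x⟩ := rfl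

lemma of_dvd_of_mem_letters {x : X} {a : M} (hx : x ∈ (hc.cocycle a).letters) : ι x ∣ a := by
  induction a using PresentedMonoid.inductionOn with
  | h w => exact of_dvd_mk_of_mem_letters g f w hx

lemma eq_one_of_letters_eq_zero {a : M} (ha : (hc.cocycle a).letters = 0) : a = 1 := by
  induction a using PresentedMonoid.inductionOn with
  | h w =>
    cases w using FreeMonoid.casesOn with
    | one => rfl
    | of_mul x w => simp [cocycle_mk] at ha

variable {x y : X}

lemma cocycle_frozen (hfr : g x y = x) (hC : ∀ z, g x (g y z) = z) :
    hc.cocycle (ι x * ι y) = ⟨{x, x}, id⟩ := by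
  ext1
  · simp [hfr]
  · funext z
    simp [hC]

lemma letters_frozen_mul (hfr : g x y = x) (hC : ∀ z, g x (g y z) = z) (a : M) :
    (hc.cocycle (ι x * ι y * a)).letters = {x, x} + (hc.cocycle a).letters := by
  rw [map_mul, hc.cocycle_frozen hfr hC]
  simp

lemma le_letters_of_frozen_dvd (hfr : g x y = x) (hC : ∀ z, g x (g y z) = z) {a : M}
    (ha : ι x * ι y ∣ a) : {x, x} ≤ (hc.cocycle a).letters := by
  obtain ⟨b, rfl⟩ := ha
  rw [hc.letters_frozen_mul hfr hC]
  exact Multiset.le_add_right _ _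

lemma frozen_dvd_of_le_letters (hfr : g x y = x) {a : M}
    (ha : {x, x} ≤ (hc.cocycle a).letters) : ι x * ι y ∣ a := by
  have hx : x ∈ (hc.cocycle a).letters := Multiset.singleton_le.mp (le_trans (by simp) ha)
  obtain ⟨b, rfl⟩ := hc.of_dvd_of_mem_letters hx
  rw [map_mul] at ha
  obtain ⟨z, hz, hzx⟩ : ∃ z ∈ (hc.cocycle b).letters, g x z = x := by
    simpa [Multiset.singleton_add] using ha
  obtain rfl := hc.injective x (hzx.trans hfr.symm)
  obtain ⟨c, rfl⟩ := hc.of_dvd_of_mem_letters hz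
  exact ⟨c, (mul_assoc _ _ _).symm⟩

variable {x₁ y₁ x₂ y₂ : X}

lemma frozen_mul_dvd (hc : LeftCompatible g f) (hfr₁ : g x₁ y₁ = x₁)
    (hC₁ : ∀ z, g x₁ (g y₁ z) = z) (hfr₂ : g x₂ y₂ = x₂) (hC₂ : ∀ z, g x₂ (g y₂ z) = z)
    (hx : x₁ ≠ x₂) {d : M} (h₁ : ι x₁ * ι y₁ ∣ d) (h₂ : ι x₂ * ι y₂ ∣ d) :
    ι x₁ * ι y₁ * (ι x₂ * ι y₂) ∣ d := by
  classical
  obtain ⟨u, rfl⟩ := h₁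
  refine mul_dvd_mul_left _ (hc.frozen_dvd_of_le_letters hfr₂ ?_)
  have h₂ := hc.le_letters_of_frozen_dvd hfr₂ hC₂ h₂
  rw [hc.letters_frozen_mul hfr₁ hC₁] at h₂
  rw [Multiset.le_iff_count] at h₂ ⊢
  intro z
  by_cases hz : z = x₂
  · subst hz
    simpa [Multiset.count_cons, Ne.symm hx] using h₂ z
  · simp [hz]

lemma frozen_commute (hc : LeftCompatible g f) (hfr₁ : g x₁ y₁ = x₁)
    (hC₁ : ∀ z, g x₁ (g y₁ z) = z) (hfr₂ : g x₂ y₂ = x₂) (hC₂ : ∀ z, g x₂ (g y₂ z) = z)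
    (hx : x₁ ≠ x₂) :
    ι x₁ * ι y₁ * (ι x₂ * ι y₂) = ι x₂ * ι y₂ * (ι x₁ * ι y₁) := by
  have h₁ : ι x₁ * ι y₁ ∣ ι x₂ * ι y₂ * (ι x₁ * ι y₁) := by
    refine hc.frozen_dvd_of_le_letters hfr₁ ?_
    rw [hc.letters_frozen_mul hfr₂ hC₂]
    exact le_add_left (hc.le_letters_of_frozen_dvd hfr₁ hC₁ dvd_rfl)
  obtain ⟨t, ht⟩ := hc.frozen_mul_dvd hfr₁ hC₁ hfr₂ hC₂ hx h₁ (dvd_mul_right _ _)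
  have hcard := congrArg (fun a => Multiset.card (hc.cocycle a).letters) ht
  simp only [mul_assoc (ι x₁ * ι y₁), hc.letters_frozen_mul hfr₁ hC₁,
    hc.letters_frozen_mul hfr₂ hC₂, hc.cocycle_frozen hfr₁ hC₁] at hcard
  have ht₁ : t = 1 := hc.eq_one_of_letters_eq_zero (by simpa using hcard)
  rw [ht, ht₁, mul_one]

lemma frozen_isRightLcm (hc : LeftCompatible g f) (hfr₁ : g x₁ y₁ = x₁)
    (hC₁ : ∀ z, g x₁ (g y₁ z) = z) (hfr₂ : g x₂ y₂ = x₂) (hC₂ : ∀ z, g x₂ (g y₂ z) = z)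
    (hx : x₁ ≠ x₂) : IsRightLcm (ι x₁ * ι y₁) (ι x₂ * ι y₂) (ι x₁ * ι y₁ * (ι x₂ * ι y₂)) :=
  ⟨dvd_mul_right _ _, hc.frozen_commute hfr₁ hC₁ hfr₂ hC₂ hx ▸ dvd_mul_right _ _,
    fun _ => hc.frozen_mul_dvd hfr₁ hC₁ hfr₂ hC₂ hx⟩

end LeftCompatible

end StructureMonoid

section Reverse

variable {X : Type*} (g f : X → X → X)

def reverseHom : PresentedMonoid (structRel g f) →* (PresentedMonoid (structRel f g))ᵐᵒᵖ :=
  PresentedMonoid.lift (fun x => op (PresentedMonoid.of _ x)) <| by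
    rintro _ _ ⟨x, y, rfl, rfl⟩
    simp only [map_mul, FreeMonoid.lift_eval_of, ← op_mul]
    exact congrArg op (of_mul_of_eq_of_mul_of f g y x)

lemma unop_reverseHom_unop_reverseHom (a : PresentedMonoid (structRel g f)) :
    unop (reverseHom f g (unop (reverseHom g f a))) = a := by
  induction a using PresentedMonoid.inductionOn with
  | h w =>
    induction w using FreeMonoid.inductionOn' with
    | one => rfl
    | of_mul x w ih =>
      rw [map_mul, map_mul, unop_mul, map_mul, unop_mul, ih]
      rfl

def reverseEquiv : PresentedMonoid (structRel g f) ≃* (PresentedMonoid (structRel f g))ᵐᵒᵖ where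
  toFun := reverseHom g f
  invFun a := unop (reverseHom f g (unop a))
  left_inv := unop_reverseHom_unop_reverseHom g f
  right_inv a := congrArg op (unop_reverseHom_unop_reverseHom f g (unop a))
  map_mul' := map_mul _

end Reverse

section Opposite

variable {M N : Type*} [Monoid M] [Monoid N] (e : M ≃* Nᵐᵒᵖ)

lemma rDvd_iff_dvd_unop {a b : M} : RDvd a b ↔ unop (e a) ∣ unop (e b) := by
  constructor
  · rintro ⟨c, rfl⟩
    exact ⟨unop (e c), by simp⟩
  · rintro ⟨c, hc⟩
    refine ⟨e.symm (op c), e.injective (unop_injective ?_)⟩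
    simp [hc]

lemma MulEquiv.isLeftLcm_of_isRightLcm_unop {a b c : M}
    (h : IsRightLcm (MulOpposite.unop (e a)) (MulOpposite.unop (e b)) (MulOpposite.unop (e c))) :
    IsLeftLcm a b c := by
  simp only [IsLeftLcm, rDvd_iff_dvd_unop e]
  exact ⟨h.1, h.2.1, fun _ ha hb => h.2.2 _ ha hb⟩

end Opposite

section Solution

variable {X : Type*} {S : X × X → X × X} {g f : X → X → X}

lemma leftCompatible_of_solution (hS : ∀ x y, S (x, y) = (g x y, f y x))
    (hinv : ∀ p, S (S p) = p) (hbr : Braided S) (hg : ∀ x, Injective (g x)) :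
    LeftCompatible g f where
  braid x y z := by
    have h := congrFun hbr (x, y, z)
    simp only [comp_apply, S12, S23, hS, Prod.mk.injEq] at h
    exact h.1
  inv x y := by simpa [hS] using congrArg Prod.fst (hinv (x, y))
  injective := hg

lemma leftCompatible_swap_of_solution (hS : ∀ x y, S (x, y) = (g x y, f y x))
    (hinv : ∀ p, S (S p) = p) (hbr : Braided S) (hf : ∀ x, Injective (f x)) :
    LeftCompatible f g where
  braid x y z := by
    have h := congrFun hbr (z, y, x)
    simp only [comp_apply, S12, S23, hS, Prod.mk.injEq] at h
    exact h.2.2.symm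
  inv x y := by simpa [hS] using congrArg Prod.snd (hinv (y, x))
  injective := hf

end Solution

theorem stmt_15_general {X : Type*}
    (S : X × X → X × X) (g f : X → X → X)
    (hS : ∀ x y : X, S (x, y) = (g x y, f y x))
    (hg : ∀ x : X, Function.Bijective (g x))
    (hf : ∀ x : X, Function.Bijective (f x))
    (hinv : ∀ p : X × X, S (S p) = p)
    (hbr : Braided S)
    (hC : PropertyC S g f)
    (x₁ y₁ x₂ y₂ : X)
    (h₁ : S (x₁, y₁) = (x₁, y₁)) (h₂ : S (x₂, y₂) = (x₂, y₂))
    (hne : (x₁, y₁) ≠ (x₂, y₂)) :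
    letI θ₁ := PresentedMonoid.of (structRel g f) x₁ * PresentedMonoid.of (structRel g f) y₁
    letI θ₂ := PresentedMonoid.of (structRel g f) x₂ * PresentedMonoid.of (structRel g f) y₂
    θ₁ * θ₂ = θ₂ * θ₁ ∧ IsRightLcm θ₁ θ₂ (θ₁ * θ₂) ∧ IsLeftLcm θ₁ θ₂ (θ₁ * θ₂) := by
  obtain ⟨hfr₁, hfr₁'⟩ : g x₁ y₁ = x₁ ∧ f y₁ x₁ = y₁ := by simpa [hS] using h₁
  obtain ⟨hfr₂, hfr₂'⟩ : g x₂ y₂ = x₂ ∧ f y₂ x₂ = y₂ := by simpa [hS] using h₂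
  obtain ⟨hC₁, hC₁'⟩ := hC x₁ y₁ h₁
  obtain ⟨hC₂, hC₂'⟩ := hC x₂ y₂ h₂
  have hx : x₁ ≠ x₂ := by
    rintro rfl
    exact hne (Prod.ext rfl ((hg x₁).injective (hfr₁.trans hfr₂.symm)))
  have hy : y₁ ≠ y₂ := by
    rintro rfl
    exact hne (Prod.ext ((hf y₁).injective (hfr₁'.trans hfr₂'.symm)) rfl)
  have hc := leftCompatible_of_solution hS hinv hbr fun x => (hg x).injective
  have hc' := leftCompatible_swap_of_solution hS hinv hbr fun x => (hf x).injective
  refine ⟨hc.frozen_commute hfr₁ hC₁ hfr₂ hC₂ hx, hc.frozen_isRightLcm hfr₁ hC₁ hfr₂ hC₂ hx,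
    (reverseEquiv g f).isLeftLcm_of_isRightLcm_unop ?_⟩
  have h := hc'.frozen_isRightLcm hfr₁' hC₁' hfr₂' hC₂' hy
  rw [hc'.frozen_commute hfr₁' hC₁' hfr₂' hC₂' hy] at h
  simpa [reverseEquiv, reverseHom, mul_assoc] using h

/-- under Property (C), two distinct frozen elements `x₁y₁` and `x₂y₂` commute
in `M(X,S)`, and their product is both their right lcm and their left lcm. -/
theorem stmt_15 {X : Type*} [Fintype X]
    (S : X × X → X × X) (g f : X → X → X)
    (hS : ∀ x y : X, S (x, y) = (g x y, f y x))
    (hg : ∀ x : X, Function.Bijective (g x))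
    (hf : ∀ x : X, Function.Bijective (f x))
    (hinv : ∀ p : X × X, S (S p) = p)
    (hbr : Braided S)
    (hC : PropertyC S g f)
    (x₁ y₁ x₂ y₂ : X)
    (h₁ : S (x₁, y₁) = (x₁, y₁)) (h₂ : S (x₂, y₂) = (x₂, y₂))
    (hne : (x₁, y₁) ≠ (x₂, y₂)) :
    letI θ₁ := PresentedMonoid.of (structRel g f) x₁ * PresentedMonoid.of (structRel g f) y₁
    letI θ₂ := PresentedMonoid.of (structRel g f) x₂ * PresentedMonoid.of (structRel g f) y₂
    θ₁ * θ₂ = θ₂ * θ₁ ∧ IsRightLcm θ₁ θ₂ (θ₁ * θ₂) ∧ IsLeftLcm θ₁ θ₂ (θ₁ * θ₂) :=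
  stmt_15_general S g f hS hg hf hinv hbr hC x₁ y₁ x₂ y₂ h₁ h₂ hne
end

section
/- Let (X,S) be a non-degenerate symmetric solution satisfying Property (C). Then the submonoid N⁺(X,S) of M(X,S) generated by the n frozen elements is a free Abelian monoid of rank n, freely generated by the frozen elements. -/
/-- Auxiliary monoid: multisets together with self-maps, a "semidirect product". -/
structure CM (X : Type*) where
  m : Multiset X
  e : X → X

namespace CM
variable {X : Type*}

instance : Mul (CM X) := ⟨fun a b => ⟨a.m + Multiset.map a.e b.m, a.e ∘ b.e⟩⟩
instance : One (CM X) := ⟨⟨0, id⟩⟩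

theorem mul_def (a b : CM X) : a * b = ⟨a.m + Multiset.map a.e b.m, a.e ∘ b.e⟩ := rfl
theorem one_def : (1 : CM X) = ⟨0, id⟩ := rfl

instance : Monoid (CM X) where
  mul_assoc a b c := by
    simp only [mul_def, CM.mk.injEq]
    exact ⟨by simp [Multiset.map_map, add_assoc], rfl⟩
  one_mul a := by cases a; simp [mul_def, one_def]
  mul_one a := by cases a; simp [mul_def, one_def]

end CM

/-- The four key pointwise identities used to commute two frozen elements. -/
theorem key_lemma {X : Type*}
    (S : X × X → X × X) (g f : X → X → X)
    (hS : ∀ x y : X, S (x, y) = (g x y, f y x))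
    (hg : ∀ x : X, Function.Bijective (g x))
    (hf : ∀ x : X, Function.Bijective (f x))
    (hbr : Braided S) (hC : PropertyC S g f)
    (x xb y yb : X) (hx : S (x, xb) = (x, xb)) (hy : S (y, yb) = (y, yb)) :
    g x (g xb y) = y ∧ f yb (f y xb) = xb ∧
      g (f (g xb y) x) (g (f y xb) yb) = yb ∧
      f (g (f y xb) yb) (f (g xb y) x) = x := by
  have hx' := hx; rw [hS, Prod.mk.injEq] at hx'
  obtain ⟨gxxb, fxbx⟩ := hx'
  have hy' := hy; rw [hS, Prod.mk.injEq] at hy'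
  obtain ⟨gyyb, fyby⟩ := hy'
  obtain ⟨Cgx, Cfx⟩ := hC x xb hx
  obtain ⟨Cgy, Cfy⟩ := hC y yb hy
  have hgxu : g x (g xb y) = y := Cgx y
  have hfybv : f yb (f y xb) = xb := Cfy xb
  -- braid at (x, xb, y) : (a, v) is frozen
  have H1 := congrFun hbr (x, xb, y)
  simp only [S12, S23, Function.comp_apply, hS, Prod.mk.injEq] at H1
  rw [gxxb, fxbx] at H1
  obtain ⟨-, Hav1, Hav2⟩ := H1
  -- Hav1 : f (g xb y) x = g (f (g xb y) x) (f y xb)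
  -- Hav2 : f y xb = f (f y xb) (f (g xb y) x)
  -- braid at (xb, y, yb) : (u, b) is frozen
  have H2 := congrFun hbr (xb, y, yb)
  simp only [S12, S23, Function.comp_apply, hS, Prod.mk.injEq] at H2
  rw [gyyb, fyby] at H2
  obtain ⟨Hub1, Hub2, -⟩ := H2
  -- Hub1 : g (g xb y) (g (f y xb) yb) = g xb y
  -- Hub2 : f (g (f y xb) yb) (g xb y) = g (f y xb) yb
  set u := g xb y with hu
  set v := f y xb with hv
  set a := f u x with ha
  set b := g v yb with hb
  -- braid at (a, v, yb)
  have H3 := congrFun hbr (a, v, yb)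
  simp only [S12, S23, Function.comp_apply, hS, Prod.mk.injEq] at H3
  rw [← Hav1, ← Hav2, ← hb, hfybv] at H3
  obtain ⟨-, -, H33⟩ := H3
  -- H33 : xb = f xb (f b a)
  have hfba : f b a = x := by
    apply (hf xb).1
    rw [← H33, fxbx]
  -- braid at (x, u, b)
  have H4 := congrFun hbr (x, u, b)
  simp only [S12, S23, Function.comp_apply, hS, Prod.mk.injEq] at H4
  rw [Hub1, Hub2, ← ha, hgxu] at H4
  obtain ⟨H41, -, -⟩ := H4
  -- H41 : g y (g a b) = y
  have hgab : g a b = yb := by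
    apply (hg y).1
    rw [H41, gyyb]
  exact ⟨hgxu, hfybv, hgab, hfba⟩

/-- under Property (C), the submonoid of `M(X,S)` generated by the `n` frozen
elements `θ_x = x·(yf x)` is a free Abelian monoid of rank `n`, freely generated by them: the
frozen elements pairwise commute, and two products of frozen elements coincide only when every
frozen generator occurs the same number of times. -/
theorem stmt_16 {X : Type*} [Fintype X] [DecidableEq X]
    (S : X × X → X × X) (g f : X → X → X)
    (hS : ∀ x y : X, S (x, y) = (g x y, f y x))
    (hg : ∀ x : X, Function.Bijective (g x))
    (hf : ∀ x : X, Function.Bijective (f x))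
    (hinv : ∀ p : X × X, S (S p) = p)
    (hbr : Braided S)
    (hC : PropertyC S g f)
    (yf : X → X) (hyf : ∀ x : X, S (x, yf x) = (x, yf x)) :
    letI θ : X → PresentedMonoid (structRel g f) := fun x =>
      PresentedMonoid.of (structRel g f) x * PresentedMonoid.of (structRel g f) (yf x)
    (∀ x x' : X, θ x * θ x' = θ x' * θ x) ∧
      ∀ l l' : List X, (l.map θ).prod = (l'.map θ).prod →
        ∀ x : X, l.count x = l'.count x := by
  set R := structRel g f with hR
  -- elementary rewriting step inside a word
  have rstep : ∀ (c d : FreeMonoid X) (p q : X),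
      PresentedMonoid.mk R (c * (FreeMonoid.of p * FreeMonoid.of q) * d) =
        PresentedMonoid.mk R (c * (FreeMonoid.of (g p q) * FreeMonoid.of (f q p)) * d) :=
    fun c d p q => Quotient.sound
      (ConGen.Rel.mul (ConGen.Rel.mul (ConGen.Rel.refl c)
        (ConGen.Rel.of _ _ ⟨p, q, rfl, rfl⟩)) (ConGen.Rel.refl d))
  -- commutativity of frozen elements
  have hcomm : ∀ x y : X,
      (PresentedMonoid.of R x * PresentedMonoid.of R (yf x)) *
        (PresentedMonoid.of R y * PresentedMonoid.of R (yf y)) =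
      (PresentedMonoid.of R y * PresentedMonoid.of R (yf y)) *
        (PresentedMonoid.of R x * PresentedMonoid.of R (yf x)) := by
    intro x y
    obtain ⟨K1, K2, K3, K4⟩ :=
      key_lemma S g f hS hg hf hbr hC x (yf x) y (yf y) (hyf x) (hyf y)
    show PresentedMonoid.mk R
        (FreeMonoid.of x * FreeMonoid.of (yf x) * FreeMonoid.of y * FreeMonoid.of (yf y)) =
      PresentedMonoid.mk R
        (FreeMonoid.of y * FreeMonoid.of (yf y) * FreeMonoid.of x * FreeMonoid.of (yf x))
    calc PresentedMonoid.mk R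
          (FreeMonoid.of x * FreeMonoid.of (yf x) * FreeMonoid.of y * FreeMonoid.of (yf y))
        = PresentedMonoid.mk R (FreeMonoid.of x * FreeMonoid.of (g (yf x) y) *
            FreeMonoid.of (f y (yf x)) * FreeMonoid.of (yf y)) :=
          rstep (FreeMonoid.of x) (FreeMonoid.of (yf y)) (yf x) y
      _ = PresentedMonoid.mk R (FreeMonoid.of (g x (g (yf x) y)) *
            FreeMonoid.of (f (g (yf x) y) x) * FreeMonoid.of (f y (yf x)) *
            FreeMonoid.of (yf y)) :=
          rstep 1 (FreeMonoid.of (f y (yf x)) * FreeMonoid.of (yf y)) x (g (yf x) y)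
      _ = PresentedMonoid.mk R (FreeMonoid.of y *
            FreeMonoid.of (f (g (yf x) y) x) * FreeMonoid.of (f y (yf x)) *
            FreeMonoid.of (yf y)) := by rw [K1]
      _ = PresentedMonoid.mk R (FreeMonoid.of y *
            FreeMonoid.of (f (g (yf x) y) x) * FreeMonoid.of (g (f y (yf x)) (yf y)) *
            FreeMonoid.of (f (yf y) (f y (yf x)))) :=
          rstep (FreeMonoid.of y * FreeMonoid.of (f (g (yf x) y) x)) 1 (f y (yf x)) (yf y)
      _ = PresentedMonoid.mk R (FreeMonoid.of y *
            FreeMonoid.of (f (g (yf x) y) x) * FreeMonoid.of (g (f y (yf x)) (yf y)) *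
            FreeMonoid.of (yf x)) := by rw [K2]
      _ = PresentedMonoid.mk R (FreeMonoid.of y *
            FreeMonoid.of (g (f (g (yf x) y) x) (g (f y (yf x)) (yf y))) *
            FreeMonoid.of (f (g (f y (yf x)) (yf y)) (f (g (yf x) y) x)) *
            FreeMonoid.of (yf x)) :=
          rstep (FreeMonoid.of y) (FreeMonoid.of (yf x)) (f (g (yf x) y) x)
            (g (f y (yf x)) (yf y))
      _ = PresentedMonoid.mk R (FreeMonoid.of y * FreeMonoid.of (yf y) *
            FreeMonoid.of x * FreeMonoid.of (yf x)) := by rw [K3, K4]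
  -- the counting homomorphism
  have hinv' : ∀ p q : X, g (g p q) (f q p) = p := by
    intro p q
    have := hinv (p, q)
    rw [hS, hS, Prod.mk.injEq] at this
    exact this.1
  have hB1 : ∀ p q z : X, g (g p q) (g (f q p) z) = g p (g q z) := by
    intro p q z
    have H := congrFun hbr (p, q, z)
    simp only [S12, S23, Function.comp_apply, hS, Prod.mk.injEq] at H
    exact H.1
  set Φ0 : X → CM X := fun x => ⟨{x}, g x⟩ with hΦ0
  have hrel : ∀ w1 w2 : FreeMonoid X, R w1 w2 →
      FreeMonoid.lift Φ0 w1 = FreeMonoid.lift Φ0 w2 := by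
    rintro w1 w2 ⟨p, q, rfl, rfl⟩
    simp only [map_mul, FreeMonoid.lift_eval_of, hΦ0, CM.mul_def, CM.mk.injEq,
      Multiset.map_singleton]
    constructor
    · rw [hinv' p q, add_comm]
    · funext z
      exact (hB1 p q z).symm
  set Φ : PresentedMonoid R →* CM X := PresentedMonoid.lift Φ0 hrel with hΦ
  have hθim : ∀ x : X,
      Φ (PresentedMonoid.of R x * PresentedMonoid.of R (yf x)) = ⟨{x} + {x}, id⟩ := by
    intro x
    have hx' := hyf x; rw [hS, Prod.mk.injEq] at hx'
    obtain ⟨Cgx, -⟩ := hC x (yf x) (hyf x)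
    rw [map_mul]
    simp only [hΦ, PresentedMonoid.lift_of, hΦ0, CM.mul_def, Multiset.map_singleton]
    rw [hx'.1]
    congr 1
    funext z; exact Cgx z
  have hprod : ∀ l : List X,
      Φ ((l.map (fun x => PresentedMonoid.of R x * PresentedMonoid.of R (yf x))).prod) =
        ⟨(l : Multiset X) + (l : Multiset X), id⟩ := by
    intro l
    induction l with
    | nil => simp [CM.one_def]
    | cons x l ih =>
        simp only [List.map_cons, List.prod_cons, map_mul, ih, hθim, CM.mul_def,
          Multiset.map_id, CM.mk.injEq, Multiset.cons_coe]
        constructor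
        · rw [← Multiset.cons_coe, ← Multiset.singleton_add]
          abel
        · rfl
  refine ⟨hcomm, ?_⟩
  intro l l' h x
  have h2 := congrArg Φ h
  rw [hprod, hprod] at h2
  have h3 := congrArg CM.m h2
  simp only at h3
  have h4 := congrArg (Multiset.count x) h3
  simp only [Multiset.count_add, Multiset.coe_count] at h4
  omega
end

section
/- Let (X,S) be a non-degenerate symmetric solution satisfying Property (C). Then the subgroup N of the structure group G(X,S) generated by the frozen elements is a normal subgroup and is free Abelian of rank n = |X|, freely generated by the frozen elements. -/
/-!
Each generator `x` of `G(X,S)` acts on `ℤ^X` by the affine map `v ↦ e_x + v ∘ g_x⁻¹`; the defining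
relations are respected because `S` is involutive and satisfies the braid relation. By Property (C)
the frozen element `θ_x = x · y` (with `S(x,y) = (x,y)`) acts as the translation by `2 e_x`, so the
image of `0` under a word in the `θ_x^{±1}` records twice the signed number of occurrences of each
`θ_x`: this is the freeness. The braid relation and `f_y ∘ f_x = id` give `z θ_x = θ_{g_z(x)} z`
in `G(X,S)`, from which the `θ_x` commute and their conjugates are again frozen elements.
-/

namespace Subgroup

variable {G : Type*} [Group G]

theorem closure_normal_of_conj_mem {T : Set G} (hT : ∀ a : G, ∀ t ∈ T, a * t * a⁻¹ ∈ T) :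
    (closure T).Normal := by
  suffices hconj : T = Group.conjugatesOfSet T by
    rw [hconj]
    exact normalClosure_normal
  refine Set.Subset.antisymm Group.subset_conjugatesOfSet fun b hb => ?_
  obtain ⟨t, ht, hconj⟩ := Group.mem_conjugatesOfSet_iff.mp hb
  obtain ⟨a, rfl⟩ := isConj_iff.mp hconj
  exact hT a t ht

theorem conj_mem_of_closure_eq_top {s T : Set G} (hs : closure s = ⊤)
    (hT : ∀ z ∈ s, ∀ t ∈ T, z * t * z⁻¹ ∈ T ∧ z⁻¹ * t * z ∈ T) (a : G) :
    ∀ t ∈ T, a * t * a⁻¹ ∈ T := by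
  have ha : a ∈ closure s := hs ▸ mem_top a
  induction ha using closure_induction'' with
  | mem z hz => exact fun t ht => (hT z hz t ht).1
  | inv_mem z hz => exact fun t ht => by simpa only [inv_inv] using (hT z hz t ht).2
  | one => simp
  | mul b c _ _ hb hc =>
    intro t ht
    simpa only [mul_inv_rev, mul_assoc] using hb _ (hc t ht)

end Subgroup

section AffinePerm

variable {X : Type*} [DecidableEq X] (σ : X → Equiv.Perm X)

def affinePerm (x : X) : Equiv.Perm (X → ℤ) :=
  ((σ x).arrowCongr (Equiv.refl ℤ)).trans (Equiv.addLeft (Pi.single x 1))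

theorem affinePerm_apply (x : X) (v : X → ℤ) :
    affinePerm σ x v = Pi.single x 1 + v ∘ (σ x).symm :=
  rfl

theorem affinePerm_mul_affinePerm_apply (x y : X) (v : X → ℤ) :
    (affinePerm σ x * affinePerm σ y) v
      = Pi.single x 1 + Pi.single (σ x y) 1 + v ∘ (σ x * σ y).symm := by
  rw [Equiv.Perm.mul_apply, affinePerm_apply, affinePerm_apply]
  funext t
  simp only [Pi.add_apply, Function.comp_apply, Pi.single_apply, Equiv.symm_apply_eq,
    Equiv.Perm.mul_def, Equiv.symm_trans_apply]
  ring

theorem affinePerm_mul_affinePerm_eq {x y x' y' : X} (hσ : σ x * σ y = σ x' * σ y')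
    (hx' : σ x y = x') (hx : σ x' y' = x) :
    affinePerm σ x * affinePerm σ y = affinePerm σ x' * affinePerm σ y' := by
  ext1 v
  rw [affinePerm_mul_affinePerm_apply, affinePerm_mul_affinePerm_apply, hσ, hx', hx,
    add_comm (Pi.single x' 1)]

theorem affinePerm_mul_affinePerm_of_mul_eq_one {x y : X} (hσ : σ x * σ y = 1) (hx : σ x y = x)
    (v : X → ℤ) : (affinePerm σ x * affinePerm σ y) v = v + Pi.single x 2 := by
  rw [affinePerm_mul_affinePerm_apply, hσ, hx]
  funext t
  simp only [Pi.add_apply, Function.comp_apply, Pi.single_apply, Equiv.Perm.one_def,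
    Equiv.refl_symm, Equiv.refl_apply]
  split_ifs <;> ring

end AffinePerm

section SignedWords

variable {X : Type*} [DecidableEq X] {H : Type*} [Group H]

def wordProd (θ : X → H) (l : List (X × Bool)) : H :=
  (l.map fun p => if p.2 then θ p.1 else (θ p.1)⁻¹).prod

def signedCount (l : List (X × Bool)) (x : X) : ℤ :=
  l.count (x, true) - l.count (x, false)

theorem signedCount_cons (a : X) (b : Bool) (l : List (X × Bool)) :
    signedCount ((a, b) :: l) = signedCount l + if b then Pi.single a 1 else -Pi.single a 1 := by
  funext t
  obtain rfl | hta := eq_or_ne t a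
  · cases b <;> simp [signedCount] <;> ring
  · cases b <;> simp [signedCount, hta, hta.symm]

theorem map_wordProd_apply_of_translation (ρ : H →* Equiv.Perm (X → ℤ)) {θ : X → H} {c : ℤ}
    (hρ : ∀ x v, ρ (θ x) v = v + Pi.single x c) (l : List (X × Bool)) (v : X → ℤ) :
    ρ (wordProd θ l) v = v + c • signedCount l := by
  induction l generalizing v with
  | nil => ext t; simp [wordProd, signedCount]
  | cons p l ih =>
    obtain ⟨a, b⟩ := p
    have hstep (w : X → ℤ) : ρ (if b then θ a else (θ a)⁻¹) w
        = w + c • (if b then Pi.single a 1 else -Pi.single a 1) := by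
      have hsingle : c • (Pi.single a 1 : X → ℤ) = Pi.single a c := by
        rw [← Pi.single_smul', smul_eq_mul, mul_one]
      cases b
      · rw [if_neg Bool.false_ne_true, if_neg Bool.false_ne_true, map_inv,
          Equiv.Perm.inv_eq_iff_eq, hρ, smul_neg, hsingle, neg_add_cancel_right]
      · rw [if_pos rfl, if_pos rfl, hρ, hsingle]
    simp only [wordProd, List.map_cons, List.prod_cons, map_mul, Equiv.Perm.mul_apply] at ih ⊢
    rw [ih, hstep, signedCount_cons, smul_add, add_assoc]

theorem signedCount_eq_of_wordProd_eq (ρ : H →* Equiv.Perm (X → ℤ)) {θ : X → H} {c : ℤ}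
    (hc : c ≠ 0) (hρ : ∀ x v, ρ (θ x) v = v + Pi.single x c) {l l' : List (X × Bool)}
    (h : wordProd θ l = wordProd θ l') : signedCount l = signedCount l' := by
  have h₀ := congrArg (fun w => ρ w 0) h
  simp only [map_wordProd_apply_of_translation ρ hρ, zero_add] at h₀
  exact smul_right_injective _ hc h₀

end SignedWords

namespace StructureGroup

open PresentedGroup (of)

variable {X : Type*} {S : X × X → X × X} {g f : X → X → X}

theorem g_g_eq_of_braided (hS : ∀ x y, S (x, y) = (g x y, f y x)) (hbr : Braided S)
    (x y z : X) : g (g x y) (g (f y x) z) = g x (g y z) :=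
  congrArg Prod.fst <| by
    simpa only [Function.comp_apply, S12, S23, hS] using congrFun hbr (x, y, z)

theorem g_g_f_eq_of_involutive (hS : ∀ x y, S (x, y) = (g x y, f y x))
    (hinv : ∀ p : X × X, S (S p) = p) (x y : X) : g (g x y) (f y x) = x := by
  simpa only [hS] using congrArg Prod.fst (hinv (x, y))

theorem of_mul_of (x y : X) :
    (of x : PresentedGroup (structGrpRels g f)) * of y = of (g x y) * of (f y x) := by
  have h := PresentedGroup.mk_eq_mk_of_mul_inv_mem (rels := structGrpRels g f) ⟨x, y, rfl⟩
  rwa [map_mul, map_mul] at h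

theorem g_eq_of_frozen (hS : ∀ x y, S (x, y) = (g x y, f y x)) {x y : X}
    (h : S (x, y) = (x, y)) : g x y = x :=
  congrArg Prod.fst ((hS x y).symm.trans h)

def frozenElem (g f : X → X → X) (yf : X → X) (x : X) : PresentedGroup (structGrpRels g f) :=
  of x * of (yf x)

section Frozen

variable {yf : X → X}

theorem of_mul_frozenElem (hS : ∀ x y, S (x, y) = (g x y, f y x)) (hbr : Braided S)
    (hg : ∀ x, Function.Injective (g x)) (hC : PropertyC S g f)
    (hyf : ∀ x, S (x, yf x) = (x, yf x)) (z x : X) :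
    of z * frozenElem g f yf x = frozenElem g f yf (g z x) * of z := by
  have hyf_g : g (f x z) (yf x) = yf (g z x) := hg (g z x) <| by
    rw [g_g_eq_of_braided hS hbr, g_eq_of_frozen hS (hyf x), g_eq_of_frozen hS (hyf (g z x))]
  calc of z * frozenElem g f yf x
      = of z * of x * of (yf x) := (mul_assoc _ _ _).symm
    _ = of (g z x) * (of (f x z) * of (yf x)) := by rw [of_mul_of, mul_assoc]
    _ = of (g z x) * (of (yf (g z x)) * of z) := by
        rw [of_mul_of, hyf_g, (hC x (yf x) (hyf x)).2]
    _ = frozenElem g f yf (g z x) * of z := (mul_assoc _ _ _).symm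

theorem frozenElem_commute (hS : ∀ x y, S (x, y) = (g x y, f y x)) (hbr : Braided S)
    (hg : ∀ x, Function.Injective (g x)) (hC : PropertyC S g f)
    (hyf : ∀ x, S (x, yf x) = (x, yf x)) (x x' : X) :
    Commute (frozenElem g f yf x) (frozenElem g f yf x') :=
  calc frozenElem g f yf x * frozenElem g f yf x'
      = of x * (of (yf x) * frozenElem g f yf x') := mul_assoc _ _ _
    _ = of x * (frozenElem g f yf (g (yf x) x') * of (yf x)) := by
        rw [of_mul_frozenElem hS hbr hg hC hyf]
    _ = frozenElem g f yf x' * frozenElem g f yf x := by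
        rw [← mul_assoc, of_mul_frozenElem hS hbr hg hC hyf, (hC x (yf x) (hyf x)).1, mul_assoc]
        rfl

theorem frozenElem_closure_normal (hS : ∀ x y, S (x, y) = (g x y, f y x)) (hbr : Braided S)
    (hg : ∀ x, Function.Bijective (g x)) (hC : PropertyC S g f)
    (hyf : ∀ x, S (x, yf x) = (x, yf x)) :
    (Subgroup.closure (Set.range (frozenElem g f yf))).Normal := by
  refine Subgroup.closure_normal_of_conj_mem
    (Subgroup.conj_mem_of_closure_eq_top (PresentedGroup.closure_range_of _) ?_)
  rintro _ ⟨z, rfl⟩ _ ⟨x, rfl⟩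
  have key := of_mul_frozenElem hS hbr (fun x => (hg x).1) hC hyf z
  obtain ⟨x₀, rfl⟩ := (hg z).2 x
  exact ⟨⟨g z (g z x₀), by rw [key, mul_inv_cancel_right]⟩,
    ⟨x₀, by rw [mul_assoc, ← key, inv_mul_cancel_left]⟩⟩

end Frozen

variable [DecidableEq X]

noncomputable def toAffinePerm (hS : ∀ x y, S (x, y) = (g x y, f y x))
    (hg : ∀ x, Function.Bijective (g x)) (hinv : ∀ p : X × X, S (S p) = p) (hbr : Braided S) :
    PresentedGroup (structGrpRels g f) →* Equiv.Perm (X → ℤ) :=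
  PresentedGroup.toGroup (f := affinePerm fun x => Equiv.ofBijective (g x) (hg x)) (by
    rintro _ ⟨x, y, rfl⟩
    simp only [map_mul, map_inv, FreeGroup.lift_apply_of, mul_inv_eq_one]
    refine affinePerm_mul_affinePerm_eq _ ?_ rfl (g_g_f_eq_of_involutive hS hinv x y)
    exact Equiv.ext fun z => (g_g_eq_of_braided hS hbr x y z).symm)

theorem toAffinePerm_of (hS : ∀ x y, S (x, y) = (g x y, f y x))
    (hg : ∀ x, Function.Bijective (g x)) (hinv : ∀ p : X × X, S (S p) = p) (hbr : Braided S)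
    (x : X) :
    toAffinePerm hS hg hinv hbr (of x)
      = affinePerm (fun x => Equiv.ofBijective (g x) (hg x)) x :=
  PresentedGroup.toGroup.of _

theorem toAffinePerm_frozenElem {yf : X → X} (hS : ∀ x y, S (x, y) = (g x y, f y x))
    (hg : ∀ x, Function.Bijective (g x)) (hinv : ∀ p : X × X, S (S p) = p) (hbr : Braided S)
    (hC : PropertyC S g f) (hyf : ∀ x, S (x, yf x) = (x, yf x)) (x : X) (v : X → ℤ) :
    toAffinePerm hS hg hinv hbr (frozenElem g f yf x) v = v + Pi.single x 2 := by
  rw [frozenElem, map_mul, toAffinePerm_of, toAffinePerm_of]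
  exact affinePerm_mul_affinePerm_of_mul_eq_one _
    (Equiv.ext (hC x (yf x) (hyf x)).1) (g_eq_of_frozen hS (hyf x)) v

end StructureGroup

open StructureGroup in
theorem stmt_17_general {X : Type*} [DecidableEq X]
    (S : X × X → X × X) (g f : X → X → X)
    (hS : ∀ x y : X, S (x, y) = (g x y, f y x))
    (hg : ∀ x : X, Function.Bijective (g x))
    (hinv : ∀ p : X × X, S (S p) = p)
    (hbr : Braided S)
    (hC : PropertyC S g f)
    (yf : X → X) (hyf : ∀ x : X, S (x, yf x) = (x, yf x)) :
    letI θ : X → PresentedGroup (structGrpRels g f) := fun x =>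
      PresentedGroup.of x * PresentedGroup.of (yf x)
    (Subgroup.closure (Set.range θ)).Normal ∧
      (∀ x x' : X, Commute (θ x) (θ x')) ∧
      ∀ l l' : List (X × Bool),
        (l.map fun p => if p.2 then θ p.1 else (θ p.1)⁻¹).prod
            = (l'.map fun p => if p.2 then θ p.1 else (θ p.1)⁻¹).prod →
          ∀ x : X,
            (l.count (x, true) : ℤ) - (l.count (x, false) : ℤ)
              = (l'.count (x, true) : ℤ) - (l'.count (x, false) : ℤ) :=
  ⟨frozenElem_closure_normal hS hbr hg hC hyf,
    frozenElem_commute hS hbr (fun x => (hg x).1) hC hyf,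
    fun _ _ h => congrFun <| signedCount_eq_of_wordProd_eq (toAffinePerm hS hg hinv hbr)
      two_ne_zero (toAffinePerm_frozenElem hS hg hinv hbr hC hyf) h⟩

/-- under Property (C), the subgroup `N` of the structure group `G(X,S)`
generated by the `n` frozen elements is normal and free Abelian of rank `n = |X|`, freely
generated by the frozen elements: they pairwise commute, and a product of frozen elements and
their inverses is determined exactly by the signed number of occurrences of each generator. -/
theorem stmt_17 {X : Type*} [Fintype X] [DecidableEq X]
    (S : X × X → X × X) (g f : X → X → X)
    (hS : ∀ x y : X, S (x, y) = (g x y, f y x))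
    (hg : ∀ x : X, Function.Bijective (g x))
    (hf : ∀ x : X, Function.Bijective (f x))
    (hinv : ∀ p : X × X, S (S p) = p)
    (hbr : Braided S)
    (hC : PropertyC S g f)
    (yf : X → X) (hyf : ∀ x : X, S (x, yf x) = (x, yf x)) :
    letI θ : X → PresentedGroup (structGrpRels g f) := fun x =>
      PresentedGroup.of x * PresentedGroup.of (yf x)
    (Subgroup.closure (Set.range θ)).Normal ∧
      (∀ x x' : X, Commute (θ x) (θ x')) ∧
      ∀ l l' : List (X × Bool),
        (l.map fun p => if p.2 then θ p.1 else (θ p.1)⁻¹).prod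
            = (l'.map fun p => if p.2 then θ p.1 else (θ p.1)⁻¹).prod →
          ∀ x : X,
            (l.count (x, true) : ℤ) - (l.count (x, false) : ℤ)
              = (l'.count (x, true) : ℤ) - (l'.count (x, false) : ℤ) :=
  stmt_17_general S g f hS hg hinv hbr hC yf hyf
end

section
/- Let (X,S) be a non-degenerate symmetric solution satisfying Property (C). Then every element a of M(X,S) can be written a = a₁·a₂ where a₁ belongs to the submonoid generated by the frozen elements and a₂ is a divisor of the Garside element Δ. -/
/-!
The `I`-structure `x ↦ (eₓ, gₓ)` maps `M(X,S)` to `ℕ^X ⋊ Sym(X)`, and its vector part is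
injective. Divisibility then becomes the pointwise order on vectors, `a ∣ b ↔ vec a ≤ vec b`,
because every vector is attained. Hence `Δ`, the least common multiple of the atoms, has vector
`(1,…,1)`, and the divisors of `Δ` are exactly the elements with all coordinates `≤ 1`.
A frozen element `z·y` with `g_z(y) = z` has vector `2 e_z`, so it divides every element having
a coordinate `≥ 2`; splitting such factors off on the left, by induction on the length, leaves
a divisor of `Δ`.
-/

/-- The monoid `ℕ^X ⋊ Sym(X)` receiving the `I`-structure of `M(X,S)`. -/
@[ext] structure VecPerm (X : Type*) where
  vec : X → ℕ
  perm : Equiv.Perm X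

namespace VecPerm

variable {X : Type*}

instance : Mul (VecPerm X) := ⟨fun a b => ⟨a.vec + b.vec ∘ a.perm.symm, a.perm * b.perm⟩⟩
instance : One (VecPerm X) := ⟨⟨0, 1⟩⟩

@[simp] lemma mul_vec (a b : VecPerm X) : (a * b).vec = a.vec + b.vec ∘ a.perm.symm := rfl
@[simp] lemma mul_perm (a b : VecPerm X) : (a * b).perm = a.perm * b.perm := rfl
@[simp] lemma one_vec : (1 : VecPerm X).vec = 0 := rfl
@[simp] lemma one_perm : (1 : VecPerm X).perm = 1 := rfl

instance : Monoid (VecPerm X) where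
  mul_assoc a b c := by ext <;> simp [add_assoc, Equiv.Perm.mul_def, Function.comp_def]
  one_mul a := by ext <;> simp [Equiv.Perm.one_def]
  mul_one a := by ext <;> simp

end VecPerm

namespace StructureMonoid

variable {X : Type*} {g f : X → X → X}

local notation "M" => PresentedMonoid (structRel g f)
local notation "ι" => PresentedMonoid.of (structRel g f)

theorem of_mul_of (x y : X) : ι x * ι y = ι (g x y) * ι (f y x) :=
  PresentedMonoid.mk_eq_mk_of_rel ⟨x, y, rfl, rfl⟩

theorem induction_on {motive : M → Prop} (a : M) (one : motive 1)
    (of_mul : ∀ x b, motive b → motive (ι x * b)) : motive a :=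
  Submonoid.induction_of_closure_eq_top_left (PresentedMonoid.closure_range_of _) a one
    (by rintro _ ⟨x, rfl⟩ b hb; exact of_mul x b hb)

variable (hg : ∀ x, Function.Bijective (g x))

noncomputable def perm (x : X) : Equiv.Perm X := Equiv.ofBijective (g x) (hg x)

@[simp] lemma perm_apply (x t : X) : perm hg x t = g x t := rfl

variable [DecidableEq X] (hid : ∀ x y, g (g x y) (f y x) = x)
  (hco : ∀ x y z, g (g x y) (g (f y x) z) = g x (g y z))

lemma single_comp_perm_symm (x y : X) :
    Pi.single y 1 ∘ (perm hg x).symm = (Pi.single (g x y) 1 : X → ℕ) := by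
  rw [Pi.single_comp_equiv, Equiv.symm_symm, perm_apply]

/-- The `I`-structure `x ↦ (eₓ, gₓ)`: `hid` makes the two sides of a defining relation agree
in the vector part, `hco` in the permutation part. -/
noncomputable def toVecPerm : M →* VecPerm X :=
  PresentedMonoid.lift (fun x => ⟨Pi.single x 1, perm hg x⟩) <| by
    rintro _ _ ⟨x, y, rfl, rfl⟩
    ext t
    · simp only [map_mul, FreeMonoid.lift_eval_of, VecPerm.mul_vec, single_comp_perm_symm, hid]
      exact add_comm _ _
    · simp [Equiv.Perm.mul_apply, hco]

local notation "φ" => toVecPerm hg hid hco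

@[simp] lemma toVecPerm_of (x : X) : φ (ι x) = ⟨Pi.single x 1, perm hg x⟩ := rfl

lemma vec_of_mul (x : X) (a : M) :
    (φ (ι x * a)).vec = Pi.single x 1 + (φ a).vec ∘ (perm hg x).symm := by
  simp

lemma vec_mul_of (a : M) (x : X) :
    (φ (a * ι x)).vec = (φ a).vec + Pi.single ((φ a).perm x) 1 := by
  simp [Pi.single_comp_equiv]

lemma vec_le_of_dvd {a b : M} (h : a ∣ b) : (φ a).vec ≤ (φ b).vec := by
  obtain ⟨c, rfl⟩ := h
  simp

lemma of_dvd_of_vec_pos (a : M) : ∀ z, 0 < (φ a).vec z → ι z ∣ a := by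
  induction a using induction_on with
  | one => simp
  | of_mul x b ih =>
    intro z hz
    by_cases hzx : z = x
    · exact hzx ▸ dvd_mul_right _ _
    obtain ⟨c, rfl⟩ := ih ((perm hg x).symm z) (by simpa [Pi.single_apply, hzx] using hz)
    refine ⟨ι (f ((perm hg x).symm z) x) * c, ?_⟩
    rw [← mul_assoc, of_mul_of, ← perm_apply hg, Equiv.apply_symm_apply, mul_assoc]

lemma of_dvd_iff (a : M) (z : X) : ι z ∣ a ↔ 0 < (φ a).vec z :=
  ⟨fun h => Nat.one_pos.trans_le (by simpa using vec_le_of_dvd hg hid hco h z),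
    of_dvd_of_vec_pos hg hid hco a z⟩

theorem vec_injective : Function.Injective fun a => (φ a).vec := by
  intro a
  induction a using induction_on with
  | one =>
    intro b (hb : (φ 1).vec = (φ b).vec)
    induction b using induction_on with
    | one => rfl
    | of_mul x b _ =>
      have hx := (of_dvd_iff hg hid hco _ x).1 (dvd_mul_right (ι x) b)
      rw [← hb] at hx
      simp at hx
  | of_mul x a ih =>
    intro b (hb : (φ (ι x * a)).vec = (φ b).vec)
    have hx := (of_dvd_iff hg hid hco _ x).1 (dvd_mul_right (ι x) a)
    obtain ⟨b, rfl⟩ := (of_dvd_iff hg hid hco b x).2 (hx.trans_eq (congrFun hb x))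
    simp only [vec_of_mul, add_right_inj] at hb
    rw [ih ((perm hg x).symm.surjective.injective_comp_right hb)]

theorem exists_vec_eq [Fintype X] (u : X → ℕ) : ∃ a, (φ a).vec = u := by
  induction h : ∑ t, u t generalizing u with
  | zero => exact ⟨1, funext fun t => by simp [Finset.sum_eq_zero_iff.1 h t (Finset.mem_univ t)]⟩
  | succ n ih =>
    obtain ⟨t, -, ht⟩ := Finset.exists_ne_zero_of_sum_ne_zero (by rw [h]; exact n.succ_ne_zero)
    have hu : u = (u - Pi.single t 1) + Pi.single t 1 := by
      ext s
      rcases eq_or_ne s t with rfl | hs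
      · simpa using (Nat.succ_pred_eq_of_ne_zero ht).symm
      · simp [hs]
    have hsum : ∑ s, u s = ∑ s, (u - Pi.single t 1 : X → ℕ) s + 1 := by
      conv_lhs => rw [hu]
      simp [Finset.sum_add_distrib]
    obtain ⟨a, ha⟩ := ih (u - Pi.single t 1) (by omega)
    exact ⟨a * ι ((φ a).perm.symm t), by rw [vec_mul_of, Equiv.apply_symm_apply, ha, ← hu]⟩

theorem dvd_iff_vec_le [Fintype X] {a b : M} : a ∣ b ↔ (φ a).vec ≤ (φ b).vec := by
  refine ⟨vec_le_of_dvd hg hid hco, fun h => ?_⟩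
  obtain ⟨c, hc⟩ := exists_vec_eq hg hid hco (((φ b).vec - (φ a).vec) ∘ (φ a).perm)
  refine ⟨c, vec_injective hg hid hco (funext fun t => ?_)⟩
  simp only [map_mul, VecPerm.mul_vec, hc]
  simp [Nat.add_sub_cancel' (h t)]

lemma sum_vec_mul [Fintype X] (a b : M) :
    ∑ t, (φ (a * b)).vec t = ∑ t, (φ a).vec t + ∑ t, (φ b).vec t := by
  simp [Finset.sum_add_distrib, Equiv.sum_comp]

lemma vec_of_mul_of_of_g_eq_self {z y : X} (hzy : g z y = z) :
    (φ (ι z * ι y)).vec = Pi.single z 2 := by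
  rw [vec_of_mul, toVecPerm_of, single_comp_perm_symm, hzy, ← Pi.single_add]

theorem vec_eq_one_of_isLcm [Fintype X] {Δ : M} (hΔdvd : ∀ x, ι x ∣ Δ)
    (hΔlcm : ∀ m, (∀ x, ι x ∣ m) → Δ ∣ m) : (φ Δ).vec = 1 := by
  obtain ⟨D, hD⟩ := exists_vec_eq hg hid hco 1
  refine le_antisymm (hD ▸ vec_le_of_dvd hg hid hco (hΔlcm D fun x => ?_)) fun x => ?_
  · exact (of_dvd_iff hg hid hco Δ x).1 (hΔdvd x)
  · exact (of_dvd_iff hg hid hco D x).2 (by simp [hD])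

theorem exists_frozen_mul_vec_le_one [Fintype X] (fr : X → X) (hfr : ∀ x, g x (fr x) = x)
    (a : M) : ∃ a₁ ∈ Submonoid.closure (Set.range fun x => ι x * ι (fr x)),
      ∃ a₂, a = a₁ * a₂ ∧ (φ a₂).vec ≤ 1 := by
  induction hn : ∑ t, (φ a).vec t using Nat.strong_induction_on generalizing a with
  | _ n ih =>
  by_cases ha : (φ a).vec ≤ 1
  · exact ⟨1, one_mem _, a, (one_mul a).symm, ha⟩
  obtain ⟨z, hz⟩ : ∃ z, 1 < (φ a).vec z := by simpa [Pi.le_def] using ha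
  obtain ⟨c, rfl⟩ : ι z * ι (fr z) ∣ a := by
    rw [dvd_iff_vec_le hg hid hco, vec_of_mul_of_of_g_eq_self hg hid hco (hfr z)]
    intro t
    rcases eq_or_ne t z with rfl | htz
    · simpa using Nat.succ_le_of_lt hz
    · simp [htz]
  have hc : ∑ t, (φ c).vec t < n := by
    rw [← hn, sum_vec_mul, vec_of_mul_of_of_g_eq_self hg hid hco (hfr z), Finset.sum_pi_single']
    simp
  obtain ⟨c₁, hc₁, c₂, rfl, hc₂⟩ := ih _ hc c rfl
  exact ⟨_ * c₁, mul_mem (Submonoid.subset_closure ⟨z, rfl⟩) hc₁, c₂, (mul_assoc _ _ _).symm, hc₂⟩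

end StructureMonoid

lemma g_g_f_of_involutive {X : Type*} {S : X × X → X × X} {g f : X → X → X}
    (hS : ∀ x y, S (x, y) = (g x y, f y x)) (hinv : ∀ p, S (S p) = p) (x y : X) :
    g (g x y) (f y x) = x := by
  simpa [hS] using congrArg Prod.fst (hinv (x, y))

lemma g_g_g_of_braided {X : Type*} {S : X × X → X × X} {g f : X → X → X}
    (hS : ∀ x y, S (x, y) = (g x y, f y x)) (hbr : Braided S) (x y z : X) :
    g (g x y) (g (f y x) z) = g x (g y z) := by
  simpa [S12, S23, hS] using congrArg Prod.fst (congrFun hbr (x, y, z))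

theorem stmt_18_general {X : Type*} [Fintype X]
    (S : X × X → X × X) (g f : X → X → X)
    (hS : ∀ x y : X, S (x, y) = (g x y, f y x))
    (hg : ∀ x : X, Function.Bijective (g x))
    (hinv : ∀ p : X × X, S (S p) = p)
    (hbr : Braided S)
    (yf : X → X) (hyf : ∀ x : X, S (x, yf x) = (x, yf x))
    (Δ : PresentedMonoid (structRel g f))
    (hΔdvd : ∀ x : X, PresentedMonoid.of (structRel g f) x ∣ Δ)
    (hΔlcm : ∀ m : PresentedMonoid (structRel g f),
      (∀ x : X, PresentedMonoid.of (structRel g f) x ∣ m) → Δ ∣ m) :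
    ∀ a : PresentedMonoid (structRel g f),
      ∃ a₁ a₂ : PresentedMonoid (structRel g f),
        a = a₁ * a₂ ∧
        a₁ ∈ Submonoid.closure (Set.range fun x : X =>
          PresentedMonoid.of (structRel g f) x * PresentedMonoid.of (structRel g f) (yf x)) ∧
        a₂ ∣ Δ := by
  classical
  intro a
  have hid := g_g_f_of_involutive hS hinv
  have hco := g_g_g_of_braided hS hbr
  have hfix (x : X) : g x (yf x) = x := by simpa [hS] using congrArg Prod.fst (hyf x)
  obtain ⟨a₁, ha₁, a₂, rfl, ha₂⟩ :=
    StructureMonoid.exists_frozen_mul_vec_le_one hg hid hco yf hfix a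
  refine ⟨a₁, a₂, rfl, ha₁, (StructureMonoid.dvd_iff_vec_le hg hid hco).2 ?_⟩
  rwa [StructureMonoid.vec_eq_one_of_isLcm hg hid hco hΔdvd hΔlcm]

/-- under Property (C), every element `a` of `M(X,S)` decomposes as `a = a₁·a₂`
with `a₁` in the submonoid generated by the frozen elements and `a₂` a divisor of the Garside
element `Δ`. -/
theorem stmt_18 {X : Type*} [Fintype X]
    (S : X × X → X × X) (g f : X → X → X)
    (hS : ∀ x y : X, S (x, y) = (g x y, f y x))
    (hg : ∀ x : X, Function.Bijective (g x))
    (hf : ∀ x : X, Function.Bijective (f x))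
    (hinv : ∀ p : X × X, S (S p) = p)
    (hbr : Braided S)
    (hC : PropertyC S g f)
    (yf : X → X) (hyf : ∀ x : X, S (x, yf x) = (x, yf x))
    (Δ : PresentedMonoid (structRel g f))
    (hΔdvd : ∀ x : X, PresentedMonoid.of (structRel g f) x ∣ Δ)
    (hΔlcm : ∀ m : PresentedMonoid (structRel g f),
      (∀ x : X, PresentedMonoid.of (structRel g f) x ∣ m) → Δ ∣ m) :
    ∀ a : PresentedMonoid (structRel g f),
      ∃ a₁ a₂ : PresentedMonoid (structRel g f),
        a = a₁ * a₂ ∧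
        a₁ ∈ Submonoid.closure (Set.range fun x : X =>
          PresentedMonoid.of (structRel g f) x * PresentedMonoid.of (structRel g f) (yf x)) ∧
        a₂ ∣ Δ :=
  stmt_18_general S g f hS hg hinv hbr yf hyf Δ hΔdvd hΔlcm
end
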